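/- arXiv:2504.15142 — 6 statements merged into one kernel-verified Lean document; each statement's English description precedes it below -/
import Mathlib

section
/- Let n > 1 be an odd integer. If a (K_2,K_{1,n})-URD(v;1,s) exists with s ≥ 1, then v ≡ 2(n+1) (mod n(n+1)) and s = (v−2)(n+1)/(2n). -/
/-- The edge set of the star with center `p.1` and leaf set `p.2`. -/
def starEdgeSet {V : Type*} [DecidableEq V] (p : V × Finset V) : Finset (Sym2 V) :=
  p.2.image (fun l => s(p.1, l))

/-- `P` is a family of vertex-disjoint `n`-stars (each given by a center and a set of
`n` leaves) whose vertex sets partition the whole vertex set. -/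
def IsStarFactorFamily {V : Type*} [Fintype V] [DecidableEq V] (n : ℕ)
    (P : Finset (V × Finset V)) : Prop :=
  (∀ p ∈ P, p.2.card = n ∧ p.1 ∉ p.2) ∧
  (∀ x : V, ∃! p, p ∈ P ∧ (x = p.1 ∨ x ∈ p.2))

/-- `E` is the edge set of a `K_{1,n}`-factor of the complete graph on `V`. -/
def IsStarFactor {V : Type*} [Fintype V] [DecidableEq V] (n : ℕ)
    (E : Finset (Sym2 V)) : Prop :=
  ∃ P : Finset (V × Finset V), IsStarFactorFamily n P ∧ E = P.biUnion starEdgeSet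

/-- `E` is the edge set of a perfect matching (a `1`-factor, i.e. a `K_2`-factor). -/
def IsOneFactor {V : Type*} [Fintype V] [DecidableEq V] (E : Finset (Sym2 V)) : Prop :=
  (∀ e ∈ E, ¬ e.IsDiag) ∧ ∀ x : V, ∃! e, e ∈ E ∧ x ∈ e

/-- A `(K_2, K_{1,n})`-URD`(v; r, s)`: a partition of the edge set of the complete graph
`K_v` into `r` classes that are `1`-factors and `s` classes that are `K_{1,n}`-factors. -/
def IsURD (n v r s : ℕ) : Prop :=
  ∃ (M : Fin r → Finset (Sym2 (Fin v))) (F : Fin s → Finset (Sym2 (Fin v))),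
    (∀ i, IsOneFactor (M i)) ∧
    (∀ j, IsStarFactor n (F j)) ∧
    (∀ i j, i ≠ j → Disjoint (M i) (M j)) ∧
    (∀ i j, i ≠ j → Disjoint (F i) (F j)) ∧
    (∀ i j, Disjoint (M i) (F j)) ∧
    (∀ e : Sym2 (Fin v),
      (e ∈ Finset.univ.biUnion M ∪ Finset.univ.biUnion F) ↔ ¬ e.IsDiag)


/-!
Counting vertices, a `1`-factor of `K_v` has `v / 2` edges and a `K_{1,n}`-factor with `t` stars
has `v = (n + 1) t` vertices and `n t` edges. Counting the edges of `K_v` then gives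
`(n + 1) (v - 2) = 2 n s`, so `n ∣ v - 2 = n t + (t - 2)`; hence `t ≡ 2 (mod n)` and
`v = (n + 1) t ≡ 2 (n + 1) (mod n (n + 1))`.
-/

open Finset

section Partition

variable {V ι : Type*} {B : Finset ι} {f : ι → Finset V}

theorem pairwiseDisjoint_of_existsUnique_mem (h : ∀ x, ∃! i, i ∈ B ∧ x ∈ f i) :
    (B : Set ι).PairwiseDisjoint f := by
  intro i hi j hj hij
  rw [Function.onFun, Finset.disjoint_left]
  intro x hxi hxj
  exact hij ((h x).unique ⟨hi, hxi⟩ ⟨hj, hxj⟩)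

theorem card_univ_eq_card_mul_of_existsUnique_mem [Fintype V] [DecidableEq V] {k : ℕ}
    (h : ∀ x, ∃! i, i ∈ B ∧ x ∈ f i) (hk : ∀ i ∈ B, #(f i) = k) :
    Fintype.card V = #B * k := by
  have hcover : B.biUnion f = univ :=
    eq_univ_of_forall fun x => mem_biUnion.mpr (h x).exists
  rw [← card_univ, ← hcover, card_biUnion (pairwiseDisjoint_of_existsUnique_mem h),
    sum_const_nat hk]

end Partition

section Factors

variable {V : Type*} [Fintype V] [DecidableEq V]

theorem IsOneFactor.card_univ {E : Finset (Sym2 V)} (h : IsOneFactor E) :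
    Fintype.card V = #E * 2 :=
  card_univ_eq_card_mul_of_existsUnique_mem (f := Sym2.toFinset)
    (by simpa only [Sym2.mem_toFinset] using h.2)
    fun e he => Sym2.card_toFinset_of_not_isDiag e (h.1 e he)

namespace IsStarFactorFamily

variable {n : ℕ} {P : Finset (V × Finset V)}

theorem card_univ (hP : IsStarFactorFamily n P) : Fintype.card V = #P * (n + 1) :=
  card_univ_eq_card_mul_of_existsUnique_mem (f := fun p => insert p.1 p.2)
    (by simpa only [mem_insert] using hP.2)
    fun p hp => by rw [card_insert_of_notMem (hP.1 p hp).2, (hP.1 p hp).1]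

theorem pairwiseDisjoint_starEdgeSet (hP : IsStarFactorFamily n P) :
    (P : Set (V × Finset V)).PairwiseDisjoint starEdgeSet := by
  intro p hp q hq hpq
  rw [Function.onFun, Finset.disjoint_left]
  rintro _ hep heq
  obtain ⟨l, -, rfl⟩ := mem_image.mp hep
  obtain ⟨l', hl', hll'⟩ := mem_image.mp heq
  have hpq_center : p.1 = q.1 ∨ p.1 ∈ q.2 := by
    rcases Sym2.eq_iff.mp hll' with ⟨hc, -⟩ | ⟨-, hc⟩
    · exact Or.inl hc.symm
    · exact Or.inr (hc ▸ hl')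
  exact hpq ((hP.2 p.1).unique ⟨hp, Or.inl rfl⟩ ⟨hq, hpq_center⟩)

theorem card_biUnion_starEdgeSet (hP : IsStarFactorFamily n P) :
    #(P.biUnion starEdgeSet) = #P * n := by
  rw [card_biUnion hP.pairwiseDisjoint_starEdgeSet, sum_const_nat]
  intro p hp
  rw [starEdgeSet, card_image_of_injective _ fun _ _ => Sym2.congr_right.mp, (hP.1 p hp).1]

end IsStarFactorFamily

theorem IsStarFactor.exists_card_eq {n : ℕ} {E : Finset (Sym2 V)} (h : IsStarFactor n E) :
    ∃ t, Fintype.card V = t * (n + 1) ∧ #E = t * n := by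
  obtain ⟨P, hP, rfl⟩ := h
  exact ⟨#P, hP.card_univ, hP.card_biUnion_starEdgeSet⟩

end Factors

namespace IsURD

variable {n v r s : ℕ}

theorem choose_two_eq_sum_card {M : Fin r → Finset (Sym2 (Fin v))}
    {F : Fin s → Finset (Sym2 (Fin v))} (hMM : ∀ i j, i ≠ j → Disjoint (M i) (M j))
    (hFF : ∀ i j, i ≠ j → Disjoint (F i) (F j)) (hMF : ∀ i j, Disjoint (M i) (F j))
    (hcover : ∀ e : Sym2 (Fin v), e ∈ univ.biUnion M ∪ univ.biUnion F ↔ ¬ e.IsDiag) :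
    v.choose 2 = ∑ i, #(M i) + ∑ j, #(F j) := by
  have hedges :
      ({e | ¬ e.IsDiag} : Finset (Sym2 (Fin v))) = univ.biUnion M ∪ univ.biUnion F := by
    ext e
    rw [mem_filter, hcover]
    exact and_iff_right (mem_univ e)
  have hdisj : Disjoint (univ.biUnion M) (univ.biUnion F) :=
    (disjoint_biUnion_left _ _ _).mpr fun i _ =>
      (disjoint_biUnion_right _ _ _).mpr fun j _ => hMF i j
  have hchoose : v.choose 2 = #({e | ¬ e.IsDiag} : Finset (Sym2 (Fin v))) := by
    rw [← Fintype.card_subtype, Sym2.card_subtype_not_diag, Fintype.card_fin]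
  rw [hchoose, hedges, card_union_of_disjoint hdisj,
    card_biUnion fun i _ j _ hij => hMM i j hij, card_biUnion fun i _ j _ hij => hFF i j hij]

theorem succ_mul_eq (h : IsURD n v r s) (hv : 0 < v) :
    (n + 1) * v = (n + 1) * (r + 1) + 2 * n * s := by
  obtain ⟨M, F, hM, hF, hMM, hFF, hMF, hcover⟩ := h
  have hedges := choose_two_eq_sum_card hMM hFF hMF hcover
  have hMcard : ∀ i, #(M i) * 2 = v := fun i => by
    simpa only [Fintype.card_fin] using (hM i).card_univ.symm
  have hFcard : ∀ j, #(F j) * (n + 1) = n * v := fun j => by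
    obtain ⟨t, hcard, hE⟩ := (hF j).exists_card_eq
    rw [Fintype.card_fin] at hcard
    rw [hE, hcard]
    ring
  have hchoose : v.choose 2 * 2 + v = v * v := by
    rw [Nat.choose_two_right, Nat.div_two_mul_two_of_even (Nat.even_mul_pred_self v)]
    cases v <;> simp only [Nat.add_sub_cancel]; ring
  refine Nat.eq_of_mul_eq_mul_left hv ?_
  calc v * ((n + 1) * v) = (n + 1) * (v.choose 2 * 2 + v) := by rw [hchoose]; ring
    _ = (n + 1) * ∑ i, #(M i) * 2 + 2 * ∑ j, #(F j) * (n + 1) + (n + 1) * v := by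
      rw [hedges, ← sum_mul, ← sum_mul]; ring
    _ = v * ((n + 1) * (r + 1) + 2 * n * s) := by
      simp only [hMcard, hFcard, sum_const, card_univ, Fintype.card_fin, smul_eq_mul]
      ring

theorem exists_eq_mul_succ (h : IsURD n v r s) (hs : 1 ≤ s) : ∃ t, v = t * (n + 1) := by
  obtain ⟨-, F, -, hF, -⟩ := h
  obtain ⟨t, hcard, -⟩ := (hF ⟨0, hs⟩).exists_card_eq
  exact ⟨t, Fintype.card_fin v ▸ hcard⟩

end IsURD

theorem modEq_two_mul_succ_of_dvd {n t v : ℕ} (hv : v = t * (n + 1))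
    (hdvd : (n : ℤ) ∣ (n + 1) * (v - 2)) : v ≡ 2 * (n + 1) [MOD n * (n + 1)] := by
  have hv2 : (n : ℤ) ∣ v - 2 := IsCoprime.dvd_of_dvd_mul_left ⟨-1, 1, by ring⟩ hdvd
  have ht : (n : ℤ) ∣ t - 2 := by
    have hsplit : (v : ℤ) - 2 = n * t + (t - 2) := by rw [hv]; push_cast; ring
    rw [hsplit] at hv2
    exact (dvd_add_right (dvd_mul_right _ _)).mp hv2
  obtain ⟨k, hk⟩ := ht
  rw [Nat.modEq_iff_dvd, hv]
  push_cast
  exact ⟨-k, by linear_combination (-((n : ℤ) + 1)) * hk⟩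

theorem necessary_conditions_general (n : ℕ)
    (v s : ℕ) (hv : 0 < v) (hs : 1 ≤ s) (h : IsURD n v 1 s) :
    v ≡ 2 * (n + 1) [MOD n * (n + 1)] ∧ 2 * n * s = (v - 2) * (n + 1) := by
  have hcount := h.succ_mul_eq hv
  obtain ⟨w, rfl⟩ := Nat.exists_eq_add_of_le' (by nlinarith : 2 ≤ v)
  have heq : 2 * n * s = w * (n + 1) := by linarith
  obtain ⟨t, ht⟩ := h.exists_eq_mul_succ hs
  refine ⟨modEq_two_mul_succ_of_dvd ht ⟨2 * s, ?_⟩, by simpa using heq⟩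
  push_cast
  linear_combination (-1 : ℤ) * (by exact_mod_cast heq : (2 * n * s : ℤ) = w * (n + 1))

/-- Necessary conditions: for odd `n > 1`, if a `(K_2, K_{1,n})`-URD`(v; 1, s)` exists
with `s ≥ 1`, then `v ≡ 2(n+1) (mod n(n+1))` and `s = (v-2)(n+1)/(2n)`. -/
theorem necessary_conditions (n : ℕ) (hn : 1 < n) (hodd : Odd n)
    (v s : ℕ) (hv : 0 < v) (hs : 1 ≤ s) (h : IsURD n v 1 s) :
    v ≡ 2 * (n + 1) [MOD n * (n + 1)] ∧ 2 * n * s = (v - 2) * (n + 1) :=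
  necessary_conditions_general n v s hv hs h
end

section
/- Let n = 2q+1 > 1 be odd and let g = n+2. There exists an almost n-star factor on Z_g (necessarily consisting of a single n-star together with one isolated vertex, since t = 1) such that: every difference d ∈ {1,…,(n+1)/2} is realized at least once by a forward edge of the factor; every difference d ∈ {1,…,(n+1)/2} is realized by at most two edges of the factor; and the n-star consists of q+1 forward edges and q backward edges. -/
/-- The "span" of an edge on `Z_g = {0, 1, …, g-1}`: for `e = {u, v}` with `u < v`,
this is `v - u`. -/
def pairSpan (g : ℕ) : Sym2 (Fin g) → ℕ :=
  Sym2.lift ⟨fun u v => max u.val v.val - min u.val v.val, by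
    intro u v
    simp [Nat.max_comm, Nat.min_comm]⟩

/-- The difference (length) of an edge `e = {u, v}` with `u < v` on `Z_g`:
`D(e) = min (v - u) (g - (v - u))`. -/
def pairDiff (g : ℕ) (e : Sym2 (Fin g)) : ℕ :=
  min (pairSpan g e) (g - pairSpan g e)

/-- `e = {u, v}` with `u < v` is a forward edge when `D(e) = v - u`. -/
def IsForwardEdge (g : ℕ) (e : Sym2 (Fin g)) : Prop :=
  pairDiff g e = pairSpan g e

/-- `e = {u, v}` with `u < v` is a backward (wrap-around) edge when
`D(e) = g - (v - u)`. -/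
def IsBackwardEdge (g : ℕ) (e : Sym2 (Fin g)) : Prop :=
  pairDiff g e = g - pairSpan g e

instance (g : ℕ) : DecidablePred (IsForwardEdge g) :=
  fun e => inferInstanceAs (Decidable (pairDiff g e = pairSpan g e))

instance (g : ℕ) : DecidablePred (IsBackwardEdge g) :=
  fun e => inferInstanceAs (Decidable (pairDiff g e = g - pairSpan g e))

/-- The edge set of a collection of stars, each given by a center and a leaf set. -/
def factorEdges (g : ℕ) (P : Finset (Fin g × Finset (Fin g))) : Finset (Sym2 (Fin g)) :=
  P.biUnion starEdgeSet

/-- An almost `n`-star factor on `Z_g` (with parameter `t ≡ g (mod n+1)`, `0 ≤ t ≤ n`):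
a collection of vertex-disjoint stars whose vertex sets partition `Z_g`, all of which
are `n`-stars except, when `t ≥ 1`, for one little star with `t - 1` leaves. -/
def IsAlmostStarFactor (n g t : ℕ) (P : Finset (Fin g × Finset (Fin g))) : Prop :=
  (∀ p ∈ P, p.1 ∉ p.2) ∧
  (∀ x : Fin g, ∃! p, p ∈ P ∧ (x = p.1 ∨ x ∈ p.2)) ∧
  (if t = 0 then ∀ p ∈ P, p.2.card = n
   else ∃ L ∈ P, L.2.card = t - 1 ∧ ∀ p ∈ P, p ≠ L → p.2.card = n)


/-!
Take the star with center `0` and leaves `1, …, n` on `Z_{n+2}`, and leave `n + 1` isolated.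
The edge `{0, l}` has difference `min l (g - l)`, so it is forward exactly when `2 l ≤ g`:
with `n = 2q + 1` the leaves `1, …, q + 1` give forward edges realizing every difference
`1, …, q + 1`, and the leaves `q + 2, …, 2q + 1` give the `q` backward edges. A difference `d`
can only come from the two leaves `d` and `g - d`.
-/

open Finset

section CenterZero

variable {g : ℕ} [NeZero g]

lemma pairSpan_zero_left (l : Fin g) : pairSpan g s(0, l) = l := by
  simp [pairSpan]

lemma pairDiff_zero_left (l : Fin g) : pairDiff g s(0, l) = min (l : ℕ) (g - l) := by
  rw [pairDiff, pairSpan_zero_left]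

lemma isForwardEdge_zero_left_iff (l : Fin g) : IsForwardEdge g s(0, l) ↔ 2 * l ≤ g := by
  rw [IsForwardEdge, pairDiff_zero_left, pairSpan_zero_left]
  omega

lemma isBackwardEdge_zero_left_iff (l : Fin g) : IsBackwardEdge g s(0, l) ↔ g ≤ 2 * l := by
  rw [IsBackwardEdge, pairDiff_zero_left, pairSpan_zero_left]
  have := l.isLt
  omega

lemma card_filter_starEdgeSet_zero (L : Finset (Fin g)) (p : Sym2 (Fin g) → Prop)
    [DecidablePred p] :
    ((starEdgeSet (0, L)).filter p).card = (L.filter fun l => p s(0, l)).card := by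
  rw [starEdgeSet, filter_image, card_image_of_injective _ fun _ _ => Sym2.congr_right.mp]

lemma card_filter_pairDiff_starEdgeSet_zero_le_two (L : Finset (Fin g)) (d : ℕ) :
    ((starEdgeSet (0, L)).filter fun e => pairDiff g e = d).card ≤ 2 := by
  rw [card_filter_starEdgeSet_zero]
  refine (card_le_card_of_injOn Fin.val (t := {d, g - d}) ?_ Fin.val_injective.injOn).trans
    card_le_two
  intro l hl
  have := l.isLt
  simp only [coe_filter, Set.mem_ofPred_eq, pairDiff_zero_left] at hl
  simp only [coe_insert, coe_singleton, Set.mem_insert_iff, Set.mem_singleton_iff]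
  omega

end CenterZero

def centralStarFactor (m : ℕ) : Finset (Fin (m + 2) × Finset (Fin (m + 2))) :=
  {(0, Ioo 0 (Fin.last (m + 1))), (Fin.last (m + 1), ∅)}

section CentralStarFactor

variable (m : ℕ)

lemma factorEdges_centralStarFactor :
    factorEdges (m + 2) (centralStarFactor m) = starEdgeSet (0, Ioo 0 (Fin.last (m + 1))) := by
  simp [factorEdges, centralStarFactor, biUnion_insert, starEdgeSet]

lemma isAlmostStarFactor_centralStarFactor :
    IsAlmostStarFactor m (m + 2) 1 (centralStarFactor m) := by
  have last_ne_zero : (Fin.last (m + 1) : Fin (m + 2)) ≠ 0 := Fin.last_pos.ne'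
  refine ⟨?_, fun x => ?_, ?_⟩
  · simp [centralStarFactor]
  · by_cases hx : x = Fin.last (m + 1)
    · refine ⟨(Fin.last (m + 1), ∅), by simp [centralStarFactor, hx], ?_⟩
      rintro p ⟨hp, hxp⟩
      simp only [centralStarFactor, mem_insert, mem_singleton] at hp
      rcases hp with rfl | rfl
      · simp [hx, last_ne_zero] at hxp
      · rfl
    · refine ⟨(0, Ioo 0 (Fin.last (m + 1))), ?_, ?_⟩
      · simp only [centralStarFactor, mem_insert, mem_singleton, true_or, true_and, mem_Ioo,
          Fin.lt_def, Fin.ext_iff, Fin.val_zero, Fin.val_last] at hx ⊢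
        omega
      · rintro p ⟨hp, hxp⟩
        simp only [centralStarFactor, mem_insert, mem_singleton] at hp
        rcases hp with rfl | rfl
        · rfl
        · simp [hx] at hxp
  · simp [centralStarFactor, Fin.card_Ioo]

end CentralStarFactor

lemma card_filter_isForwardEdge_centralStar (q : ℕ) :
    ((starEdgeSet ((0 : Fin (2 * q + 1 + 2)), Ioo 0 (Fin.last (2 * q + 1 + 1)))).filter
      (IsForwardEdge _)).card = q + 1 := by
  have : (Ioo 0 (Fin.last _)).filter (fun l => IsForwardEdge _ s(0, l)) =
      Ioc (0 : Fin (2 * q + 1 + 2)) ⟨q + 1, by omega⟩ := by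
    ext l
    simp only [mem_filter, mem_Ioo, mem_Ioc, isForwardEdge_zero_left_iff, Fin.lt_def,
      Fin.le_def, Fin.val_last, Fin.val_zero]
    omega
  rw [card_filter_starEdgeSet_zero, this, Fin.card_Ioc]
  rfl

lemma card_filter_isBackwardEdge_centralStar (q : ℕ) :
    ((starEdgeSet ((0 : Fin (2 * q + 1 + 2)), Ioo 0 (Fin.last (2 * q + 1 + 1)))).filter
      (IsBackwardEdge _)).card = q := by
  have : (Ioo 0 (Fin.last _)).filter (fun l => IsBackwardEdge _ s(0, l)) =
      Ico (⟨q + 2, by omega⟩ : Fin (2 * q + 1 + 2)) (Fin.last _) := by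
    ext l
    simp only [mem_filter, mem_Ioo, mem_Ico, isBackwardEdge_zero_left_iff, Fin.lt_def,
      Fin.le_def, Fin.val_last, Fin.val_zero]
    omega
  rw [card_filter_starEdgeSet_zero, this, Fin.card_Ico, Fin.val_last, Fin.val_mk]
  omega

theorem almost_factor_k_zero_general (n q : ℕ) (hq : n = 2 * q + 1)
    (g : ℕ) (hg : g = n + 2) :
    ∃ P : Finset (Fin g × Finset (Fin g)),
      IsAlmostStarFactor n g 1 P ∧
      (∀ d, 1 ≤ d → d ≤ (n + 1) / 2 →
        ∃ e ∈ factorEdges g P, pairDiff g e = d ∧ IsForwardEdge g e) ∧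
      (∀ d, 1 ≤ d → d ≤ (n + 1) / 2 →
        ((factorEdges g P).filter (fun e => pairDiff g e = d)).card ≤ 2) ∧
      (∀ p ∈ P, p.2.card = n →
        ((starEdgeSet p).filter (fun e => IsForwardEdge g e)).card = q + 1 ∧
        ((starEdgeSet p).filter (fun e => IsBackwardEdge g e)).card = q) := by
  subst hg hq
  refine ⟨centralStarFactor (2 * q + 1), isAlmostStarFactor_centralStarFactor _, ?_, ?_, ?_⟩
  · intro d hd1 hd2
    have hdq : d ≤ q + 1 := by omega
    refine ⟨s(0, ⟨d, by omega⟩), ?_, ?_, ?_⟩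
    · rw [factorEdges_centralStarFactor]
      refine mem_image_of_mem _ ?_
      simp only [mem_Ioo, Fin.lt_def, Fin.val_zero, Fin.val_last]
      omega
    · rw [pairDiff_zero_left, Fin.val_mk]
      omega
    · rw [isForwardEdge_zero_left_iff, Fin.val_mk]
      omega
  · intro d _ _
    rw [factorEdges_centralStarFactor]
    exact card_filter_pairDiff_starEdgeSet_zero_le_two _ d
  · intro p hp hcard
    simp only [centralStarFactor, mem_insert, mem_singleton] at hp
    rcases hp with rfl | rfl
    · exact ⟨card_filter_isForwardEdge_centralStar q, card_filter_isBackwardEdge_centralStar q⟩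
    · simp at hcard

/-- Lemma 3 (k = 0): for odd `n = 2q+1 > 1` and `g = n + 2`, there is an almost
`n`-star factor on `Z_g` (one `n`-star plus an isolated vertex) in which every
difference `d ∈ {1, …, (n+1)/2}` is realized at least once by a forward edge and at
most twice overall, and the `n`-star has `q+1` forward edges and `q` backward edges. -/
theorem almost_factor_k_zero (n q : ℕ) (hq : n = 2 * q + 1) (hn : 1 < n)
    (g : ℕ) (hg : g = n + 2) :
    ∃ P : Finset (Fin g × Finset (Fin g)),
      IsAlmostStarFactor n g 1 P ∧
      (∀ d, 1 ≤ d → d ≤ (n + 1) / 2 →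
        ∃ e ∈ factorEdges g P, pairDiff g e = d ∧ IsForwardEdge g e) ∧
      (∀ d, 1 ≤ d → d ≤ (n + 1) / 2 →
        ((factorEdges g P).filter (fun e => pairDiff g e = d)).card ≤ 2) ∧
      (∀ p ∈ P, p.2.card = n →
        ((starEdgeSet p).filter (fun e => IsForwardEdge g e)).card = q + 1 ∧
        ((starEdgeSet p).filter (fun e => IsBackwardEdge g e)).card = q) :=
  almost_factor_k_zero_general n q hq g hg
end

section
/- Let n = 2q+1 > 1 be odd, let k be an integer with 1 ≤ k ≤ q, let g = 2nk+n+2, let μ = (2nk+n+1)/2, and let w be the unique integer with 1 ≤ w ≤ n+1 and w ≡ μ+1 (mod n+1). There exists an almost n-star factor on Z_g admitting an admissible pure/prime labeling such that: every difference d ∈ {1,…,μ} is realized by its pure edge, which is a forward edge; every difference d ∈ {1,…,μ} is realized by at most two edges of the factor; exactly one star is a mixed star, and it has q+1 pure edges and q prime edges, of which w−1 are backward edges and q−(w−1) are forward edges; and the little star has t−1 leaves, where t is the unique integer with 0 ≤ t ≤ n and t ≡ g (mod n+1). -/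
/-- An admissible pure/prime labeling of the edge set `E` of an almost star factor,
given by the subset `Pure ⊆ E` of pure edges (the rest are prime): every difference
realized by `E` is realized by exactly one pure edge and at most one prime edge. -/
def IsAdmissibleLabeling (g : ℕ) (E Pure : Finset (Sym2 (Fin g))) : Prop :=
  Pure ⊆ E ∧
  ∀ d : ℕ, (∃ e ∈ E, pairDiff g e = d) →
    (Pure.filter (fun e => pairDiff g e = d)).card = 1 ∧
    ((E \ Pure).filter (fun e => pairDiff g e = d)).card ≤ 1

/-- A star is mixed (w.r.t. the set `Pure` of pure edges) if it contains both a pure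
edge and a prime edge. -/
def IsMixedStar (g : ℕ) (Pure : Finset (Sym2 (Fin g)))
    (p : Fin g × Finset (Fin g)) : Prop :=
  (starEdgeSet p ∩ Pure).Nonempty ∧ (starEdgeSet p \ Pure).Nonempty

/-!
Write `k = c + 1` and `q = a + c + 1`, so that `n = 2a + 2c + 3`, `g = 2μ + 1` with
`μ = cn + n + c + a + 2`, and put `b = μ + a + 2`. The factor is explicit:

* the `c + 1` pure stars, centred at `c - s` (`s ≤ c`) with leaves `c + 1 + sn, …, c + sn + n`,
  realize by forward edges every difference below `(c + 1)(n + 1)` that is not a multiple of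
  `n + 1`;
* the mixed star is centred at `2μ`; its pure leaves are `μ, …, b - 1` (differences
  `μ - a - 1, …, μ`) and the holes `b + n + u(n + 1)`, `u < c` (the multiples of `n + 1`); its
  prime leaves are the `a + 1` vertices just below `μ`, joined to it by backward edges, and
  `b, …, b + c - 1`;
* the `c` prime stars, centred at `b + c + u`, take the `n` vertices after hole `u`, and the
  little star, centred at `b + 2c`, takes the `2a + 2` vertices after it.

The `μ` pure edges realize all `μ` differences, hence each once; a prime edge can be read off
its difference (`primeEdgeOfDiff`), so prime differences are distinct too.
-/

open Finset Fin.NatCast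

lemma mul_add_le_mul_of_lt {u c m : ℕ} (h : u < c) : u * m + m ≤ c * m := by
  simpa [Nat.succ_mul] using Nat.mul_le_mul_right m h

lemma div_mod_mul_add {m s r : ℕ} (hr : r < m) : (s * m + r) / m = s ∧ (s * m + r) % m = r :=
  (Nat.div_mod_unique (by omega)).2 ⟨by ring, hr⟩

lemma eq_of_modEq_add_mul {x r k m : ℕ} (h : x ≡ r + k * m [MOD m]) (hx : x < m) (hr : r < m) :
    x = r :=
  (h.trans (Nat.add_mul_mod_self_right r k m)).eq_of_lt_of_lt hx hr

section Edges

variable {g : ℕ}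

lemma isForwardEdge_iff (e : Sym2 (Fin g)) : IsForwardEdge g e ↔ 2 * pairSpan g e ≤ g := by
  unfold IsForwardEdge pairDiff
  omega

lemma isBackwardEdge_iff (e : Sym2 (Fin g)) : IsBackwardEdge g e ↔ g ≤ 2 * pairSpan g e := by
  unfold IsBackwardEdge pairDiff
  omega

lemma two_mul_pairDiff_le (e : Sym2 (Fin g)) : 2 * pairDiff g e ≤ g := by
  unfold pairDiff
  omega

lemma pairDiff_pos {u v : Fin g} (h : u ≠ v) : 0 < pairDiff g s(u, v) := by
  have := Fin.val_ne_of_ne h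
  simp only [pairDiff, pairSpan, Sym2.lift_mk]
  omega

variable [NeZero g]

lemma pairSpan_natCast {u v : ℕ} (huv : u ≤ v) (hv : v < g) :
    pairSpan g s((u : Fin g), (v : Fin g)) = v - u := by
  rw [pairSpan, Sym2.lift_mk]
  simp only [Fin.val_cast_of_lt hv, Fin.val_cast_of_lt (huv.trans_lt hv)]
  omega

lemma pairDiff_natCast_of_two_mul_lt {u v : ℕ} (huv : u ≤ v) (hv : v < g)
    (h : 2 * (v - u) < g) :
    pairDiff g s((u : Fin g), (v : Fin g)) = v - u ∧
      IsForwardEdge g s((u : Fin g), (v : Fin g)) ∧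
      ¬ IsBackwardEdge g s((u : Fin g), (v : Fin g)) := by
  rw [isForwardEdge_iff, isBackwardEdge_iff, pairDiff, pairSpan_natCast huv hv]
  omega

lemma pairDiff_natCast_of_lt_two_mul {u v : ℕ} (huv : u ≤ v) (hv : v < g)
    (h : g < 2 * (v - u)) :
    pairDiff g s((u : Fin g), (v : Fin g)) = g - (v - u) ∧
      IsBackwardEdge g s((u : Fin g), (v : Fin g)) ∧
      ¬ IsForwardEdge g s((u : Fin g), (v : Fin g)) := by
  rw [isForwardEdge_iff, isBackwardEdge_iff, pairDiff, pairSpan_natCast huv hv]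
  omega

end Edges

section Labeling

variable {g : ℕ} {E Pure Prime : Finset (Sym2 (Fin g))}

lemma card_filter_pairDiff_le_one (hinj : Set.InjOn (pairDiff g) E) (d : ℕ) :
    (E.filter (pairDiff g · = d)).card ≤ 1 :=
  card_le_one.2 fun _ he _ he' => hinj (mem_filter.1 he).1 (mem_filter.1 he').1
    ((mem_filter.1 he).2.trans (mem_filter.1 he').2.symm)

lemma card_filter_pairDiff_le_two (hE : E ⊆ Pure ∪ Prime) (hPure : Set.InjOn (pairDiff g) Pure)
    (hPrime : Set.InjOn (pairDiff g) Prime) (d : ℕ) :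
    (E.filter (pairDiff g · = d)).card ≤ 2 :=
  calc (E.filter (pairDiff g · = d)).card
      ≤ ((Pure ∪ Prime).filter (pairDiff g · = d)).card := card_le_card (filter_subset_filter _ hE)
    _ ≤ (Pure.filter (pairDiff g · = d)).card + (Prime.filter (pairDiff g · = d)).card := by
        rw [filter_union]; exact card_union_le _ _
    _ ≤ 2 := by
        have := card_filter_pairDiff_le_one hPure d
        have := card_filter_pairDiff_le_one hPrime d
        omega

lemma isAdmissibleLabeling_of_injOn (hPureE : Pure ⊆ E) (hE : E ⊆ Pure ∪ Prime)
    (hPure : Set.InjOn (pairDiff g) Pure) (hPrime : Set.InjOn (pairDiff g) Prime)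
    (hcover : ∀ e ∈ E, ∃ e' ∈ Pure, pairDiff g e' = pairDiff g e) :
    IsAdmissibleLabeling g E Pure := by
  refine ⟨hPureE, ?_⟩
  rintro d ⟨e, he, rfl⟩
  obtain ⟨e', he', hd⟩ := hcover e he
  refine ⟨le_antisymm (card_filter_pairDiff_le_one hPure _) ?_, ?_⟩
  · exact card_pos.2 ⟨e', mem_filter.2 ⟨he', hd⟩⟩
  · refine (card_le_card (filter_subset_filter _ fun x hx => ?_)).trans
      (card_filter_pairDiff_le_one hPrime _)
    obtain ⟨hxE, hxPure⟩ := mem_sdiff.1 hx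
    exact (mem_union.1 (hE hxE)).resolve_left hxPure

end Labeling

section Stars

variable {V : Type*} [DecidableEq V]

def vertices (p : V × Finset V) : Finset V := insert p.1 p.2

lemma mem_vertices {p : V × Finset V} {x : V} : x ∈ vertices p ↔ x = p.1 ∨ x ∈ p.2 :=
  mem_insert

lemma card_starEdgeSet (p : V × Finset V) : (starEdgeSet p).card = p.2.card :=
  card_image_of_injective _ fun _ _ h => Sym2.congr_right.1 h

lemma eq_of_mem_starEdgeSet {P : Finset (V × Finset V)}
    (hP : ∀ x, ∃! p, p ∈ P ∧ (x = p.1 ∨ x ∈ p.2)) {p p' : V × Finset V} (hp : p ∈ P)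
    (hp' : p' ∈ P) {e : Sym2 V} (he : e ∈ starEdgeSet p) (he' : e ∈ starEdgeSet p') :
    p = p' := by
  obtain ⟨l, hl, rfl⟩ := mem_image.1 he
  obtain ⟨l', hl', hll'⟩ := mem_image.1 he'
  have hx : p.1 = p'.1 ∨ p.1 ∈ p'.2 := by
    rcases Sym2.eq_iff.1 hll' with ⟨h, -⟩ | ⟨-, h⟩
    · exact Or.inl h.symm
    · exact Or.inr (h ▸ hl')
  exact (hP p.1).unique ⟨hp, Or.inl rfl⟩ ⟨hp', hx⟩

end Stars

lemma pairDiff_pos_of_mem_starEdgeSet {g : ℕ} {p : Fin g × Finset (Fin g)} (hp : p.1 ∉ p.2)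
    {e : Sym2 (Fin g)} (he : e ∈ starEdgeSet p) : 0 < pairDiff g e := by
  obtain ⟨l, hl, rfl⟩ := mem_image.1 he
  exact pairDiff_pos fun h => hp (h ▸ hl)

def liftStar (g : ℕ) [NeZero g] (p : ℕ × Finset ℕ) : Fin g × Finset (Fin g) :=
  ((p.1 : Fin g), p.2.image (↑))

section Lift

variable {g : ℕ} [NeZero g]

lemma starEdgeSet_liftStar (p : ℕ × Finset ℕ) :
    starEdgeSet (liftStar g p) = p.2.image fun l : ℕ => s((p.1 : Fin g), (l : Fin g)) := by
  simp only [starEdgeSet, liftStar, image_image]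
  rfl

lemma disjoint_starEdgeSet_liftStar {x : ℕ} {L L' : Finset ℕ} (hL : ∀ l ∈ L, l < g)
    (hL' : ∀ l ∈ L', l < g) (h : Disjoint L L') :
    Disjoint (starEdgeSet (liftStar g (x, L))) (starEdgeSet (liftStar g (x, L'))) := by
  rw [starEdgeSet_liftStar, starEdgeSet_liftStar, disjoint_left]
  rintro _ he he'
  obtain ⟨l, hl, rfl⟩ := mem_image.1 he
  obtain ⟨l', hl', hll'⟩ := mem_image.1 he'
  have hl_eq := congrArg Fin.val (Sym2.congr_right.1 hll')
  rw [Fin.val_cast_of_lt (hL l hl), Fin.val_cast_of_lt (hL' l' hl')] at hl_eq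
  exact disjoint_left.1 h hl (hl_eq ▸ hl')

variable {p : ℕ × Finset ℕ} (hp : ∀ v ∈ vertices p, v < g)
include hp

lemma mem_liftStar_leaves {x : Fin g} : x ∈ (liftStar g p).2 ↔ (x : ℕ) ∈ p.2 := by
  refine ⟨fun hx => ?_, fun hx => mem_image.2 ⟨x, hx, Fin.cast_val_eq_self x⟩⟩
  obtain ⟨l, hl, rfl⟩ := mem_image.1 hx
  rwa [Fin.val_cast_of_lt (hp l (mem_insert_of_mem hl))]

lemma mem_vertices_liftStar {x : Fin g} : x ∈ vertices (liftStar g p) ↔ (x : ℕ) ∈ vertices p := by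
  rw [mem_vertices, mem_vertices, mem_liftStar_leaves hp, Fin.ext_iff,
    show (liftStar g p).1 = (p.1 : Fin g) from rfl,
    Fin.val_cast_of_lt (hp p.1 (mem_insert_self _ _))]

lemma card_liftStar : (liftStar g p).2.card = p.2.card :=
  card_image_of_injOn fun u hu v hv huv => by
    simpa [Fin.val_cast_of_lt (hp u (mem_insert_of_mem hu)),
      Fin.val_cast_of_lt (hp v (mem_insert_of_mem hv))] using congrArg Fin.val huv

lemma liftStar_center_notMem (h : p.1 ∉ p.2) : (liftStar g p).1 ∉ (liftStar g p).2 := by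
  rwa [mem_liftStar_leaves hp, show (liftStar g p).1 = (p.1 : Fin g) from rfl,
    Fin.val_cast_of_lt (hp p.1 (mem_insert_self _ _))]

lemma card_starEdgeSet_liftStar : (starEdgeSet (liftStar g p)).card = p.2.card := by
  rw [card_starEdgeSet, card_liftStar hp]

end Lift

lemma existsUnique_mem_liftStar {g : ℕ} [NeZero g] {S : Finset (ℕ × Finset ℕ)}
    (owner : ℕ → ℕ × Finset ℕ) (hS : ∀ p ∈ S, ∀ v ∈ vertices p, v < g)
    (hcover : ∀ v < g, owner v ∈ S ∧ v ∈ vertices (owner v))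
    (howner : ∀ p ∈ S, ∀ v ∈ vertices p, owner v = p) (x : Fin g) :
    ∃! p, p ∈ S.image (liftStar g) ∧ (x = p.1 ∨ x ∈ p.2) := by
  obtain ⟨hmem, hx⟩ := hcover x x.isLt
  refine ⟨liftStar g (owner x), ⟨mem_image_of_mem _ hmem, ?_⟩, ?_⟩
  · exact mem_vertices.1 ((mem_vertices_liftStar (hS _ hmem)).2 hx)
  · rintro _ ⟨hlift, hxp⟩
    obtain ⟨p, hp, rfl⟩ := mem_image.1 hlift
    rw [howner p hp x ((mem_vertices_liftStar (hS p hp)).1 (mem_vertices.2 hxp))]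

namespace SmallK

variable (a c : ℕ)

def n : ℕ := 2 * a + 2 * c + 3

def μ : ℕ := c * n a c + n a c + c + a + 2

def b : ℕ := μ a c + a + 2

def g : ℕ := 2 * μ a c + 1

instance : NeZero (g a c) := ⟨Nat.succ_ne_zero _⟩

lemma params : n a c = 2 * a + 2 * c + 3 ∧ μ a c = c * n a c + n a c + c + a + 2 ∧
    b a c = μ a c + a + 2 ∧ g a c = 2 * μ a c + 1 :=
  ⟨rfl, rfl, rfl, rfl⟩

def pureStar (s : ℕ) : ℕ × Finset ℕ :=
  (c - s, Ico (c + 1 + s * n a c) (c + 1 + s * n a c + n a c))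

def hole (u : ℕ) : ℕ := b a c + n a c + u * (n a c + 1)

def primeStar (u : ℕ) : ℕ × Finset ℕ :=
  (b a c + c + u, Ico (hole a c u + 1) (hole a c u + 1 + n a c))

def littleStar : ℕ × Finset ℕ := (b a c + 2 * c, Ico (b a c + 2 * c + 1) (b a c + n a c))

def mixedPureLeaves : Finset ℕ := Ico (μ a c) (b a c) ∪ (range c).image (hole a c)

def mixedBackLeaves : Finset ℕ := Ico (c * n a c + n a c + c + 1) (μ a c)

def mixedForwardLeaves : Finset ℕ := Ico (b a c) (b a c + c)

def mixedPrimeLeaves : Finset ℕ := mixedBackLeaves a c ∪ mixedForwardLeaves a c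

def mixedStar : ℕ × Finset ℕ := (2 * μ a c, mixedPureLeaves a c ∪ mixedPrimeLeaves a c)

def stars : Finset (ℕ × Finset ℕ) :=
  (range (c + 1)).image (pureStar a c) ∪ (range c).image (primeStar a c) ∪
    {littleStar a c, mixedStar a c}

def owner (v : ℕ) : ℕ × Finset ℕ :=
  if v ≤ c then pureStar a c (c - v)
  else if v < c * n a c + n a c + c + 1 then pureStar a c ((v - (c + 1)) / n a c)
  else if v < b a c + c then mixedStar a c
  else if v < b a c + 2 * c then primeStar a c (v - (b a c + c))
  else if v < b a c + n a c then littleStar a c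
  else if (v - (b a c + n a c)) % (n a c + 1) = 0 then mixedStar a c
  else primeStar a c ((v - (b a c + n a c)) / (n a c + 1))

def factor : Finset (Fin (g a c) × Finset (Fin (g a c))) := (stars a c).image (liftStar (g a c))

def pureEdges : Finset (Sym2 (Fin (g a c))) :=
  (range (c + 1)).biUnion (fun s => starEdgeSet (liftStar (g a c) (pureStar a c s))) ∪
    starEdgeSet (liftStar (g a c) (2 * μ a c, mixedPureLeaves a c))

def primeEdges : Finset (Sym2 (Fin (g a c))) :=
  (range c).biUnion (fun u => starEdgeSet (liftStar (g a c) (primeStar a c u))) ∪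
    starEdgeSet (liftStar (g a c) (littleStar a c)) ∪
    starEdgeSet (liftStar (g a c) (2 * μ a c, mixedPrimeLeaves a c))

-- A prime edge has difference `1, …, 2a + 2` on the little star, `2a + c + 4 + un + r`
-- (`r < n`) on prime star `u`, `cn + n + 1, …, cn + n + c` to a forward leaf of the mixed star
-- and `cn + n + c + 2, …, μ` to a backward one.
def primeEdgeOfDiff (d : ℕ) : Sym2 (Fin (g a c)) :=
  if d ≤ 2 * a + 2 then
    s(((b a c + 2 * c : ℕ) : Fin (g a c)), ((b a c + 2 * c + d : ℕ) : Fin (g a c)))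
  else if d ≤ c * n a c + n a c then
    s(((b a c + c + (d - (2 * a + c + 4)) / n a c : ℕ) : Fin (g a c)),
      ((hole a c ((d - (2 * a + c + 4)) / n a c) + 1 + (d - (2 * a + c + 4)) % n a c : ℕ) :
        Fin (g a c)))
  else if d ≤ c * n a c + n a c + c then
    s(((2 * μ a c : ℕ) : Fin (g a c)), ((2 * μ a c - d : ℕ) : Fin (g a c)))
  else s(((2 * μ a c : ℕ) : Fin (g a c)), ((d - 1 : ℕ) : Fin (g a c)))

variable {a c}

lemma mem_stars {p : ℕ × Finset ℕ} :
    p ∈ stars a c ↔ (∃ s ≤ c, p = pureStar a c s) ∨ (∃ u < c, p = primeStar a c u) ∨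
      p = littleStar a c ∨ p = mixedStar a c := by
  simp only [stars, mem_union, mem_image, mem_range, mem_insert, mem_singleton,
    Nat.lt_succ_iff, eq_comm (a := p), or_assoc]

lemma hole_eq (u : ℕ) : hole a c u = b a c + n a c + u * n a c + u := by
  unfold hole; ring

lemma two_mul_μ_eq : 2 * μ a c = hole a c c := by
  rw [hole_eq]; unfold b μ; ring

lemma mem_vertices_pureStar {s v : ℕ} :
    v ∈ vertices (pureStar a c s) ↔
      v = c - s ∨ c + 1 + s * n a c ≤ v ∧ v < c + 1 + s * n a c + n a c := by
  simp [vertices, pureStar]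

lemma mem_vertices_primeStar {u v : ℕ} :
    v ∈ vertices (primeStar a c u) ↔
      v = b a c + c + u ∨ hole a c u + 1 ≤ v ∧ v < hole a c u + 1 + n a c := by
  simp [vertices, primeStar]

lemma mem_vertices_littleStar {v : ℕ} :
    v ∈ vertices (littleStar a c) ↔ b a c + 2 * c ≤ v ∧ v < b a c + n a c := by
  simp only [vertices, littleStar, mem_insert, mem_Ico]
  have := params a c
  omega

lemma mem_mixedLeaves {v : ℕ} :
    v ∈ (mixedStar a c).2 ↔
      c * n a c + n a c + c + 1 ≤ v ∧ v < b a c + c ∨ ∃ u < c, v = hole a c u := by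
  simp only [mixedStar, mixedPureLeaves, mixedPrimeLeaves, mixedBackLeaves, mixedForwardLeaves,
    mem_union, mem_Ico, mem_image, mem_range, eq_comm (a := v)]
  have := params a c
  constructor
  · rintro ((h | h) | h | h)
    exacts [Or.inl (by omega), Or.inr h, Or.inl (by omega), Or.inl (by omega)]
  · rintro (h | h)
    · by_cases hμ : v < μ a c
      · exact Or.inr (Or.inl (by omega))
      · by_cases hb : v < b a c
        · exact Or.inl (Or.inl (by omega))
        · exact Or.inr (Or.inr (by omega))
    · exact Or.inl (Or.inr h)

lemma pureStar_mem {s : ℕ} (hs : s ≤ c) : pureStar a c s ∈ stars a c :=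
  mem_stars.2 (Or.inl ⟨s, hs, rfl⟩)

lemma primeStar_mem {u : ℕ} (hu : u < c) : primeStar a c u ∈ stars a c :=
  mem_stars.2 (Or.inr (Or.inl ⟨u, hu, rfl⟩))

lemma littleStar_mem : littleStar a c ∈ stars a c := mem_stars.2 (Or.inr (Or.inr (Or.inl rfl)))

lemma mixedStar_mem : mixedStar a c ∈ stars a c := mem_stars.2 (Or.inr (Or.inr (Or.inr rfl)))

lemma vertices_lt {p : ℕ × Finset ℕ} (hp : p ∈ stars a c) : ∀ v ∈ vertices p, v < g a c := by
  have := params a c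
  rcases mem_stars.1 hp with ⟨s, hs, rfl⟩ | ⟨u, hu, rfl⟩ | rfl | rfl <;> intro v hv
  · have := Nat.mul_le_mul_right (n a c) hs
    rw [mem_vertices_pureStar] at hv
    omega
  · have := mul_add_le_mul_of_lt (m := n a c) hu
    rw [mem_vertices_primeStar, hole_eq] at hv
    omega
  · rw [mem_vertices_littleStar] at hv
    omega
  · rcases mem_vertices.1 hv with rfl | hv
    · exact Nat.lt_succ_self _
    · rcases mem_mixedLeaves.1 hv with hv | ⟨u, hu, rfl⟩
      · omega
      · have := mul_add_le_mul_of_lt (m := n a c) hu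
        rw [hole_eq]
        omega

lemma center_notMem {p : ℕ × Finset ℕ} (hp : p ∈ stars a c) : p.1 ∉ p.2 := by
  have := params a c
  rcases mem_stars.1 hp with ⟨s, hs, rfl⟩ | ⟨u, hu, rfl⟩ | rfl | rfl
  · simp only [pureStar, mem_Ico]
    omega
  · simp only [primeStar, hole_eq, mem_Ico]
    omega
  · simp only [littleStar, mem_Ico]
    omega
  · rw [mem_mixedLeaves, show (mixedStar a c).1 = 2 * μ a c from rfl]
    rintro (h | ⟨u, hu, h⟩)
    · omega
    · have := mul_add_le_mul_of_lt (m := n a c) hu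
      rw [two_mul_μ_eq, hole_eq, hole_eq] at h
      omega

lemma owner_eq {p : ℕ × Finset ℕ} (hp : p ∈ stars a c) {v : ℕ} (hv : v ∈ vertices p) :
    owner a c v = p := by
  have := params a c
  rcases mem_stars.1 hp with ⟨s, hs, rfl⟩ | ⟨u, hu, rfl⟩ | rfl | rfl
  · have := Nat.mul_le_mul_right (n a c) hs
    rcases mem_vertices_pureStar.1 hv with rfl | hv
    · rw [owner, if_pos (Nat.sub_le c s), Nat.sub_sub_self hs]
    · obtain ⟨r, hr, rfl⟩ : ∃ r < n a c, v = c + 1 + s * n a c + r :=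
        ⟨v - (c + 1 + s * n a c), by omega, by omega⟩
      rw [owner, if_neg (by omega), if_pos (by omega),
        show c + 1 + s * n a c + r - (c + 1) = s * n a c + r by omega, (div_mod_mul_add hr).1]
  · have := mul_add_le_mul_of_lt (m := n a c) hu
    have := hole_eq (a := a) (c := c) u
    rcases mem_vertices_primeStar.1 hv with rfl | hv
    · rw [owner, if_neg (by omega), if_neg (by omega), if_neg (by omega), if_pos (by omega),
        Nat.add_sub_cancel_left]
    · obtain ⟨r, hr, rfl⟩ : ∃ r < n a c, v = hole a c u + 1 + r :=
        ⟨v - (hole a c u + 1), by omega, by omega⟩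
      have hj : hole a c u + 1 + r - (b a c + n a c) = u * (n a c + 1) + (r + 1) := by
        rw [hole]; omega
      obtain ⟨hdiv, hmod⟩ := div_mod_mul_add (s := u) (show r + 1 < n a c + 1 by omega)
      rw [owner, if_neg (by omega), if_neg (by omega), if_neg (by omega), if_neg (by omega),
        if_neg (by omega), hj, hmod, if_neg (by omega), hdiv]
  · rw [mem_vertices_littleStar] at hv
    rw [owner, if_neg (by omega), if_neg (by omega), if_neg (by omega), if_neg (by omega),
      if_pos hv.2]
  · have hmix : ∀ u ≤ c, owner a c (hole a c u) = mixedStar a c := fun u hu => by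
      have := Nat.mul_le_mul_right (n a c) hu
      have := hole_eq (a := a) (c := c) u
      rw [owner, if_neg (by omega), if_neg (by omega), if_neg (by omega), if_neg (by omega),
        if_neg (by omega), hole, Nat.add_sub_cancel_left, if_pos (Nat.mul_mod_left _ _)]
    rcases mem_vertices.1 hv with rfl | hv
    · exact (congrArg (owner a c) two_mul_μ_eq).trans (hmix c le_rfl)
    · rcases mem_mixedLeaves.1 hv with hv | ⟨u, hu, rfl⟩
      · rw [owner, if_neg (by omega), if_neg (by omega), if_pos hv.2]
      · exact hmix u hu.le

lemma mem_vertices_pureStar_div {v : ℕ} (h₁ : c < v) (h₂ : v < c * n a c + n a c + c + 1) :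
    (v - (c + 1)) / n a c ≤ c ∧ v ∈ vertices (pureStar a c ((v - (c + 1)) / n a c)) := by
  have := params a c
  have hdiv := Nat.div_add_mod (v - (c + 1)) (n a c)
  have hmod := Nat.mod_lt (v - (c + 1)) (show 0 < n a c by omega)
  generalize (v - (c + 1)) / n a c = s at hdiv ⊢
  rw [Nat.mul_comm] at hdiv
  have hs : s ≤ c := by
    by_contra! hs
    have := mul_add_le_mul_of_lt (m := n a c) hs
    omega
  exact ⟨hs, mem_vertices_pureStar.2 (Or.inr (by omega))⟩

lemma mem_vertices_mixedStar_of_mod_eq_zero {v : ℕ} (h₁ : b a c + n a c ≤ v) (h₂ : v < g a c)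
    (h : (v - (b a c + n a c)) % (n a c + 1) = 0) : v ∈ vertices (mixedStar a c) := by
  have := params a c
  have hdiv := Nat.div_add_mod (v - (b a c + n a c)) (n a c + 1)
  generalize (v - (b a c + n a c)) / (n a c + 1) = u at hdiv
  have hv : v = hole a c u := by rw [hole]; rw [Nat.mul_comm] at hdiv; omega
  rcases Nat.lt_or_ge u c with hu | hu
  · exact mem_vertices.2 (Or.inr (mem_mixedLeaves.2 (Or.inr ⟨u, hu, hv⟩)))
  · have := Nat.mul_le_mul_right (n a c) hu
    have := hole_eq (a := a) (c := c) u
    have := (two_mul_μ_eq (a := a) (c := c)).trans (hole_eq c)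
    exact mem_vertices.2 (Or.inl (by show v = 2 * μ a c; omega))

lemma mem_vertices_primeStar_of_mod_ne_zero {v : ℕ} (h₁ : b a c + n a c ≤ v) (h₂ : v < g a c)
    (h : (v - (b a c + n a c)) % (n a c + 1) ≠ 0) :
    (v - (b a c + n a c)) / (n a c + 1) < c ∧
      v ∈ vertices (primeStar a c ((v - (b a c + n a c)) / (n a c + 1))) := by
  have := params a c
  have hdiv := Nat.div_add_mod (v - (b a c + n a c)) (n a c + 1)
  have hmod := Nat.mod_lt (v - (b a c + n a c)) (show 0 < n a c + 1 by omega)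
  generalize (v - (b a c + n a c)) / (n a c + 1) = u at hdiv ⊢
  rw [Nat.mul_comm] at hdiv
  have hu : u < c := by
    by_contra! hu
    have := Nat.mul_le_mul_right (n a c + 1) hu
    have := two_mul_μ_eq (a := a) (c := c)
    rw [hole] at this
    omega
  refine ⟨hu, mem_vertices_primeStar.2 (Or.inr ?_)⟩
  rw [hole]
  omega

lemma owner_mem {v : ℕ} (hv : v < g a c) :
    owner a c v ∈ stars a c ∧ v ∈ vertices (owner a c v) := by
  have := params a c
  unfold owner
  split_ifs with h₁ h₂ h₃ h₄ h₅ h₆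
  · exact ⟨pureStar_mem (Nat.sub_le c v), mem_vertices_pureStar.2 (Or.inl (by omega))⟩
  · obtain ⟨hs, hv⟩ := mem_vertices_pureStar_div (by omega) h₂
    exact ⟨pureStar_mem hs, hv⟩
  · exact ⟨mixedStar_mem, mem_vertices.2 (Or.inr (mem_mixedLeaves.2 (Or.inl ⟨by omega, h₃⟩)))⟩
  · exact ⟨primeStar_mem (by omega), mem_vertices_primeStar.2 (Or.inl (by omega))⟩
  · exact ⟨littleStar_mem, mem_vertices_littleStar.2 ⟨by omega, h₅⟩⟩
  · exact ⟨mixedStar_mem, mem_vertices_mixedStar_of_mod_eq_zero (by omega) hv h₆⟩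
  · obtain ⟨hu, hv⟩ := mem_vertices_primeStar_of_mod_ne_zero (by omega) hv h₆
    exact ⟨primeStar_mem hu, hv⟩

lemma hole_injective : Function.Injective (hole a c) := fun u u' h => by
  simpa [hole] using h

lemma card_mixedPureLeaves : (mixedPureLeaves a c).card = a + 2 + c := by
  have := params a c
  rw [mixedPureLeaves, card_union_of_disjoint, card_image_of_injective _ hole_injective,
    Nat.card_Ico, card_range]
  · omega
  · refine disjoint_left.2 fun l hl hl' => ?_
    obtain ⟨u, -, rfl⟩ := mem_image.1 hl'
    rw [mem_Ico, hole_eq] at hl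
    omega

lemma card_mixedPrimeLeaves : (mixedPrimeLeaves a c).card = a + 1 + c := by
  have := params a c
  rw [mixedPrimeLeaves, mixedBackLeaves, mixedForwardLeaves, card_union_of_disjoint,
    Nat.card_Ico, Nat.card_Ico]
  · omega
  · exact disjoint_left.2 fun l hl hl' => by rw [mem_Ico] at hl hl'; omega

lemma disjoint_mixedPureLeaves_mixedPrimeLeaves :
    Disjoint (mixedPureLeaves a c) (mixedPrimeLeaves a c) := by
  have := params a c
  refine disjoint_left.2 fun l hl hl' => ?_
  simp only [mixedPureLeaves, mixedPrimeLeaves, mixedBackLeaves, mixedForwardLeaves, mem_union,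
    mem_Ico, mem_image] at hl hl'
  rcases hl with hl | ⟨u, -, rfl⟩
  · omega
  · rw [hole_eq] at hl'
    omega

lemma card_leaves_of_ne_littleStar {p : ℕ × Finset ℕ} (hp : p ∈ stars a c)
    (hne : p ≠ littleStar a c) : p.2.card = n a c := by
  rcases mem_stars.1 hp with ⟨s, -, rfl⟩ | ⟨u, -, rfl⟩ | rfl | rfl
  · simp [pureStar]
  · simp [primeStar]
  · exact absurd rfl hne
  · rw [mixedStar, card_union_of_disjoint disjoint_mixedPureLeaves_mixedPrimeLeaves,
      card_mixedPureLeaves, card_mixedPrimeLeaves, n]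
    omega

theorem factor_isAlmostStarFactor :
    IsAlmostStarFactor (n a c) (g a c) (2 * a + 3) (factor a c) := by
  refine ⟨?_, existsUnique_mem_liftStar (owner a c) (fun p => vertices_lt) (fun v => owner_mem)
    (fun p hp v => owner_eq hp), ?_⟩
  · simp only [factor, forall_mem_image]
    exact fun p hp => liftStar_center_notMem (vertices_lt hp) (center_notMem hp)
  · rw [if_neg (by omega)]
    refine ⟨_, mem_image_of_mem _ littleStar_mem, ?_, ?_⟩
    · rw [card_liftStar (vertices_lt littleStar_mem)]
      simp only [littleStar, Nat.card_Ico, n]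
      omega
    · simp only [factor, forall_mem_image]
      intro p hp hne
      rw [card_liftStar (vertices_lt hp)]
      exact card_leaves_of_ne_littleStar hp (by rintro rfl; exact hne rfl)

lemma pairDiff_forwardEdge {x l : ℕ} (hxl : x ≤ l) (hl : l < g a c) (h : l - x ≤ μ a c) :
    pairDiff (g a c) s((x : Fin (g a c)), (l : Fin (g a c))) = l - x ∧
      IsForwardEdge (g a c) s((x : Fin (g a c)), (l : Fin (g a c))) :=
  (pairDiff_natCast_of_two_mul_lt hxl hl (by rw [g]; omega)).imp_right And.left

lemma pairDiff_mixedEdge_of_le {l : ℕ} (h₁ : μ a c ≤ l) (h₂ : l < 2 * μ a c) :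
    pairDiff (g a c) s(((2 * μ a c : ℕ) : Fin (g a c)), (l : Fin (g a c))) = 2 * μ a c - l ∧
      IsForwardEdge (g a c) s(((2 * μ a c : ℕ) : Fin (g a c)), (l : Fin (g a c))) ∧
      ¬ IsBackwardEdge (g a c) s(((2 * μ a c : ℕ) : Fin (g a c)), (l : Fin (g a c))) := by
  rw [Sym2.eq_swap]
  exact pairDiff_natCast_of_two_mul_lt h₂.le (Nat.lt_succ_self _) (by rw [g]; omega)

lemma pairDiff_mixedEdge_of_lt {l : ℕ} (h : l < μ a c) :
    pairDiff (g a c) s(((2 * μ a c : ℕ) : Fin (g a c)), (l : Fin (g a c))) = l + 1 ∧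
      IsBackwardEdge (g a c) s(((2 * μ a c : ℕ) : Fin (g a c)), (l : Fin (g a c))) ∧
      ¬ IsForwardEdge (g a c) s(((2 * μ a c : ℕ) : Fin (g a c)), (l : Fin (g a c))) := by
  rw [Sym2.eq_swap]
  obtain ⟨h₁, h₂, h₃⟩ := pairDiff_natCast_of_lt_two_mul (g := g a c) (u := l) (by omega)
    (Nat.lt_succ_self _) (by rw [g]; omega)
  exact ⟨by rw [h₁, g]; omega, h₂, h₃⟩

lemma mixedHalf_vertices_lt {L : Finset ℕ} (hL : L ⊆ (mixedStar a c).2) :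
    ∀ v ∈ vertices (2 * μ a c, L), v < g a c :=
  fun v hv => vertices_lt mixedStar_mem v (insert_subset_insert _ hL hv)

lemma starEdgeSet_liftStar_mixedStar :
    starEdgeSet (liftStar (g a c) (mixedStar a c)) =
      starEdgeSet (liftStar (g a c) (2 * μ a c, mixedPureLeaves a c)) ∪
        starEdgeSet (liftStar (g a c) (2 * μ a c, mixedPrimeLeaves a c)) := by
  simp only [starEdgeSet_liftStar, mixedStar, image_union]

lemma factorEdges_factor : factorEdges (g a c) (factor a c) = pureEdges a c ∪ primeEdges a c := by
  rw [factorEdges, factor, image_biUnion, stars, union_biUnion, union_biUnion, image_biUnion,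
    image_biUnion, biUnion_insert, singleton_biUnion, starEdgeSet_liftStar_mixedStar, pureEdges,
    primeEdges]
  ext e
  simp only [mem_union]
  tauto

lemma center_eq_of_mem_starEdgeSet {p p' : ℕ × Finset ℕ} (hp : p ∈ stars a c)
    (hp' : p' ∈ stars a c) {e : Sym2 (Fin (g a c))} (he : e ∈ starEdgeSet (liftStar (g a c) p))
    (he' : e ∈ starEdgeSet (liftStar (g a c) p')) : p.1 = p'.1 := by
  have h := congrArg (fun q => (q.1 : ℕ)) <| eq_of_mem_starEdgeSet
    factor_isAlmostStarFactor.2.1 (mem_image_of_mem _ hp) (mem_image_of_mem _ hp') he he'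
  simpa only [liftStar, Fin.val_cast_of_lt (vertices_lt hp _ (mem_insert_self _ _)),
    Fin.val_cast_of_lt (vertices_lt hp' _ (mem_insert_self _ _))] using h

lemma disjoint_pureEdges_primeEdges : Disjoint (pureEdges a c) (primeEdges a c) := by
  have := params a c
  have hpureL : starEdgeSet (liftStar (g a c) (2 * μ a c, mixedPureLeaves a c)) ⊆
      starEdgeSet (liftStar (g a c) (mixedStar a c)) :=
    starEdgeSet_liftStar_mixedStar ▸ subset_union_left
  have hprimeL : starEdgeSet (liftStar (g a c) (2 * μ a c, mixedPrimeLeaves a c)) ⊆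
      starEdgeSet (liftStar (g a c) (mixedStar a c)) :=
    starEdgeSet_liftStar_mixedStar ▸ subset_union_right
  rw [disjoint_left]
  intro e hpure hprime
  simp only [pureEdges, primeEdges, mem_union, mem_biUnion, mem_range] at hpure hprime
  rcases hpure with ⟨s, hs, he⟩ | he
  · have hs := pureStar_mem (a := a) (Nat.lt_succ_iff.1 hs)
    rcases hprime with (⟨u, hu, he'⟩ | he') | he'
    · have := center_eq_of_mem_starEdgeSet hs (primeStar_mem hu) he he'
      simp only [pureStar, primeStar] at this
      omega
    · have := center_eq_of_mem_starEdgeSet hs littleStar_mem he he'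
      simp only [pureStar, littleStar] at this
      omega
    · have := center_eq_of_mem_starEdgeSet hs mixedStar_mem he (hprimeL he')
      simp only [pureStar, mixedStar] at this
      omega
  · rcases hprime with (⟨u, hu, he'⟩ | he') | he'
    · have := center_eq_of_mem_starEdgeSet mixedStar_mem (primeStar_mem hu) (hpureL he) he'
      simp only [mixedStar, primeStar] at this
      omega
    · have := center_eq_of_mem_starEdgeSet mixedStar_mem littleStar_mem (hpureL he) he'
      simp only [mixedStar, littleStar] at this
      omega
    · exact disjoint_left.1 (disjoint_starEdgeSet_liftStar
        (fun l hl => mixedHalf_vertices_lt subset_union_left l (mem_insert_of_mem hl))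
        (fun l hl => mixedHalf_vertices_lt subset_union_right l (mem_insert_of_mem hl))
        disjoint_mixedPureLeaves_mixedPrimeLeaves) he he'

lemma exists_pureEdge_of_pureStar {s r : ℕ} (hs : s ≤ c) (hr : r < n a c) :
    ∃ e ∈ pureEdges a c, pairDiff (g a c) e = s * n a c + s + r + 1 ∧ IsForwardEdge (g a c) e := by
  have := params a c
  have := Nat.mul_le_mul_right (n a c) hs
  obtain ⟨hdiff, hfwd⟩ := pairDiff_forwardEdge (a := a) (c := c) (x := c - s)
    (l := c + 1 + s * n a c + r) (by omega) (by omega) (by omega)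
  refine ⟨_, mem_union_left _ (mem_biUnion.2 ⟨s, mem_range.2 (by omega), ?_⟩), ?_, hfwd⟩
  · rw [starEdgeSet_liftStar]
    exact mem_image_of_mem _ (by simp only [pureStar, mem_Ico]; omega)
  · omega

lemma exists_pureEdge_of_hole {j : ℕ} (hj₁ : 1 ≤ j) (hj₂ : j ≤ c) :
    ∃ e ∈ pureEdges a c, pairDiff (g a c) e = j * n a c + j ∧ IsForwardEdge (g a c) e := by
  have := params a c
  have hc : c * n a c = (c - j) * n a c + j * n a c := by rw [← Nat.add_mul]; congr 1; omega
  have := hole_eq (a := a) (c := c) (c - j)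
  obtain ⟨hdiff, hfwd, -⟩ := pairDiff_mixedEdge_of_le (a := a) (c := c)
    (l := hole a c (c - j)) (by omega) (by omega)
  refine ⟨_, mem_union_right _ ?_, ?_, hfwd⟩
  · rw [starEdgeSet_liftStar]
    exact mem_image_of_mem _ (mem_union_right _
      (mem_image_of_mem (hole a c) (mem_range.2 (show c - j < c by omega))))
  · omega

lemma exists_pureEdge_of_mixedStar {d : ℕ} (hd₁ : c * n a c + n a c + c < d) (hd₂ : d ≤ μ a c) :
    ∃ e ∈ pureEdges a c, pairDiff (g a c) e = d ∧ IsForwardEdge (g a c) e := by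
  have := params a c
  obtain ⟨hdiff, hfwd, -⟩ := pairDiff_mixedEdge_of_le (a := a) (c := c)
    (l := 2 * μ a c - d) (by omega) (by omega)
  refine ⟨_, mem_union_right _ ?_, ?_, hfwd⟩
  · rw [starEdgeSet_liftStar]
    exact mem_image_of_mem _ (mem_union_left _ (mem_Ico.2 ⟨by omega, by omega⟩))
  · omega

lemma exists_pureEdge_pairDiff_eq {d : ℕ} (hd₁ : 1 ≤ d) (hd₂ : d ≤ μ a c) :
    ∃ e ∈ pureEdges a c, pairDiff (g a c) e = d ∧ IsForwardEdge (g a c) e := by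
  have := params a c
  rcases Nat.lt_or_ge (c * n a c + n a c + c) d with hd | hd
  · exact exists_pureEdge_of_mixedStar hd hd₂
  have hdiv := Nat.div_add_mod (d - 1) (n a c + 1)
  have hmod := Nat.mod_lt (d - 1) (show 0 < n a c + 1 by omega)
  generalize (d - 1) / (n a c + 1) = s at hdiv
  generalize (d - 1) % (n a c + 1) = r at hdiv hmod
  rw [show (n a c + 1) * s = s * n a c + s by ring] at hdiv
  have hs : s ≤ c := by
    by_contra! hs
    have := mul_add_le_mul_of_lt (m := n a c) hs
    omega
  rcases Nat.lt_or_ge r (n a c) with hr | hr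
  · obtain ⟨e, he, hde, hfwd⟩ := exists_pureEdge_of_pureStar hs hr
    exact ⟨e, he, by omega, hfwd⟩
  · have hsc : s < c := by
      by_contra! hsc
      have := Nat.mul_le_mul_right (n a c) hsc
      omega
    obtain ⟨e, he, hde, hfwd⟩ := exists_pureEdge_of_hole (Nat.le_add_left 1 s) hsc
    exact ⟨e, he, by rw [hde, Nat.succ_mul]; omega, hfwd⟩

lemma card_pureEdges_le : (pureEdges a c).card ≤ μ a c :=
  calc (pureEdges a c).card
      ≤ ∑ s ∈ range (c + 1), (starEdgeSet (liftStar (g a c) (pureStar a c s))).card +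
          (starEdgeSet (liftStar (g a c) (2 * μ a c, mixedPureLeaves a c))).card :=
        (card_union_le _ _).trans (Nat.add_le_add_right card_biUnion_le _)
    _ = (c + 1) * n a c + (a + 2 + c) := by
        rw [sum_congr rfl fun s hs => (card_starEdgeSet_liftStar
            (vertices_lt (pureStar_mem (Nat.lt_succ_iff.1 (mem_range.1 hs))))).trans
              (show (pureStar a c s).2.card = n a c by simp [pureStar]),
          card_starEdgeSet_liftStar (mixedHalf_vertices_lt subset_union_left),
          card_mixedPureLeaves, sum_const, card_range, smul_eq_mul]
    _ = μ a c := by rw [μ]; ring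

lemma pairDiff_mem_Icc {e : Sym2 (Fin (g a c))} (he : e ∈ factorEdges (g a c) (factor a c)) :
    pairDiff (g a c) e ∈ Icc 1 (μ a c) := by
  obtain ⟨p, hp, he⟩ := mem_biUnion.1 he
  have := pairDiff_pos_of_mem_starEdgeSet (factor_isAlmostStarFactor.1 p hp) he
  have := two_mul_pairDiff_le e
  have := params a c
  rw [mem_Icc]
  omega

lemma injOn_pairDiff_pureEdges : Set.InjOn (pairDiff (g a c)) (pureEdges a c) :=
  injOn_of_surjOn_of_card_le _
    (fun e he => pairDiff_mem_Icc (factorEdges_factor ▸ mem_union_left _ he))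
    (fun d hd => by
      obtain ⟨e, he, hde, -⟩ :=
        exists_pureEdge_pairDiff_eq (mem_Icc.1 hd).1 (mem_Icc.1 hd).2
      exact ⟨e, he, hde⟩)
    (by simpa using card_pureEdges_le)

lemma primeEdgeOfDiff_pairDiff {e : Sym2 (Fin (g a c))} (he : e ∈ primeEdges a c) :
    primeEdgeOfDiff a c (pairDiff (g a c) e) = e := by
  have := params a c
  simp only [primeEdges, primeStar, littleStar, mixedPrimeLeaves, mixedBackLeaves,
    mixedForwardLeaves, mem_union, mem_biUnion, mem_range, starEdgeSet_liftStar, mem_image,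
    mem_Ico] at he
  rcases he with (⟨u, hu, l, hl, rfl⟩ | ⟨l, hl, rfl⟩) | ⟨l, hl | hl, rfl⟩
  · obtain ⟨r, hr, rfl⟩ : ∃ r < n a c, l = hole a c u + 1 + r :=
      ⟨l - (hole a c u + 1), by omega, by omega⟩
    have := mul_add_le_mul_of_lt (m := n a c) hu
    have := hole_eq (a := a) (c := c) u
    obtain ⟨hd, -⟩ := pairDiff_forwardEdge (a := a) (c := c) (x := b a c + c + u)
      (l := hole a c u + 1 + r) (by omega) (by omega) (by omega)
    obtain ⟨hdiv, hmod⟩ := div_mod_mul_add (s := u) hr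
    rw [hd, show hole a c u + 1 + r - (b a c + c + u) = u * n a c + r + (2 * a + c + 4) by omega,
      primeEdgeOfDiff, if_neg (by omega), if_pos (by omega), Nat.add_sub_cancel, hdiv, hmod]
  · obtain ⟨hd, -⟩ := pairDiff_forwardEdge (a := a) (c := c) (x := b a c + 2 * c) (l := l)
      (by omega) (by omega) (by omega)
    rw [hd, primeEdgeOfDiff, if_pos (by omega), Nat.add_sub_cancel' (by omega)]
  · obtain ⟨hd, -⟩ := pairDiff_mixedEdge_of_lt (a := a) (c := c) hl.2
    rw [hd, primeEdgeOfDiff, if_neg (by omega), if_neg (by omega), if_neg (by omega),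
      Nat.add_sub_cancel]
  · obtain ⟨hd, -⟩ := pairDiff_mixedEdge_of_le (a := a) (c := c) (l := l) (by omega) (by omega)
    rw [hd, primeEdgeOfDiff, if_neg (by omega), if_neg (by omega), if_pos (by omega),
      Nat.sub_sub_self (by omega)]

lemma injOn_pairDiff_primeEdges : Set.InjOn (pairDiff (g a c)) (primeEdges a c) :=
  Set.LeftInvOn.injOn fun _ he => primeEdgeOfDiff_pairDiff he

lemma starEdgeSet_mixedStar_inter_pureEdges :
    starEdgeSet (liftStar (g a c) (mixedStar a c)) ∩ pureEdges a c =
      starEdgeSet (liftStar (g a c) (2 * μ a c, mixedPureLeaves a c)) := by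
  rw [starEdgeSet_liftStar_mixedStar, union_inter_distrib_right,
    inter_eq_left.2 (show _ ⊆ pureEdges a c from subset_union_right),
    disjoint_iff_inter_eq_empty.1 (disjoint_pureEdges_primeEdges.symm.mono_left
      (show _ ⊆ primeEdges a c from subset_union_right)), union_empty]

lemma starEdgeSet_mixedStar_sdiff_pureEdges :
    starEdgeSet (liftStar (g a c) (mixedStar a c)) \ pureEdges a c =
      starEdgeSet (liftStar (g a c) (2 * μ a c, mixedPrimeLeaves a c)) := by
  rw [starEdgeSet_liftStar_mixedStar, union_sdiff_distrib,
    sdiff_eq_empty_iff_subset.2 (show _ ⊆ pureEdges a c from subset_union_right),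
    sdiff_eq_self_of_disjoint (disjoint_pureEdges_primeEdges.symm.mono_left
      (show _ ⊆ primeEdges a c from subset_union_right)),
    empty_union]

lemma filter_isBackwardEdge_mixedPrimeEdges :
    (starEdgeSet (liftStar (g a c) (2 * μ a c, mixedPrimeLeaves a c))).filter
        (IsBackwardEdge (g a c)) =
      starEdgeSet (liftStar (g a c) (2 * μ a c, mixedBackLeaves a c)) := by
  simp only [starEdgeSet_liftStar, mixedPrimeLeaves, image_union, filter_union]
  rw [filter_true_of_mem, filter_false_of_mem, union_empty]
  · simp only [mixedForwardLeaves, mem_image, mem_Ico]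
    rintro _ ⟨l, hl, rfl⟩
    have := params a c
    exact (pairDiff_mixedEdge_of_le (by omega) (by omega)).2.2
  · simp only [mixedBackLeaves, mem_image, mem_Ico]
    rintro _ ⟨l, hl, rfl⟩
    exact (pairDiff_mixedEdge_of_lt hl.2).2.1

lemma filter_isForwardEdge_mixedPrimeEdges :
    (starEdgeSet (liftStar (g a c) (2 * μ a c, mixedPrimeLeaves a c))).filter
        (IsForwardEdge (g a c)) =
      starEdgeSet (liftStar (g a c) (2 * μ a c, mixedForwardLeaves a c)) := by
  simp only [starEdgeSet_liftStar, mixedPrimeLeaves, image_union, filter_union]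
  rw [filter_false_of_mem, filter_true_of_mem, empty_union]
  · simp only [mixedForwardLeaves, mem_image, mem_Ico]
    rintro _ ⟨l, hl, rfl⟩
    have := params a c
    exact (pairDiff_mixedEdge_of_le (by omega) (by omega)).2.1
  · simp only [mixedBackLeaves, mem_image, mem_Ico]
    rintro _ ⟨l, hl, rfl⟩
    exact (pairDiff_mixedEdge_of_lt hl.2).2.2

lemma card_starEdgeSet_mixedHalf {L : Finset ℕ} (hL : L ⊆ (mixedStar a c).2) :
    (starEdgeSet (liftStar (g a c) (2 * μ a c, L))).card = L.card :=
  card_starEdgeSet_liftStar (mixedHalf_vertices_lt hL)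

lemma isMixedStar_iff {p : Fin (g a c) × Finset (Fin (g a c))} (hp : p ∈ factor a c) :
    IsMixedStar (g a c) (pureEdges a c) p ↔ p = liftStar (g a c) (mixedStar a c) := by
  constructor
  · rintro ⟨hpure, hprime⟩
    obtain ⟨p, hstar, rfl⟩ := mem_image.1 hp
    have hnotPrime : ¬ starEdgeSet (liftStar (g a c) p) ⊆ primeEdges a c := fun h => by
      obtain ⟨e, he⟩ := hpure
      exact disjoint_left.1 disjoint_pureEdges_primeEdges (mem_inter.1 he).2 (h (mem_inter.1 he).1)
    rcases mem_stars.1 hstar with ⟨s, hs, rfl⟩ | ⟨u, hu, rfl⟩ | rfl | rfl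
    · refine absurd (sdiff_eq_empty_iff_subset.2 ?_) hprime.ne_empty
      exact (subset_biUnion_of_mem _ (mem_range.2 (Nat.lt_succ_of_le hs))).trans
        (show _ ⊆ pureEdges a c from subset_union_left)
    · exact (hnotPrime <| (subset_biUnion_of_mem _ (mem_range.2 hu)).trans
        (show _ ⊆ primeEdges a c from subset_union_left.trans subset_union_left)).elim
    · exact (hnotPrime (show _ ⊆ primeEdges a c from
        subset_union_right.trans subset_union_left)).elim
    · rfl
  · rintro rfl
    rw [IsMixedStar, starEdgeSet_mixedStar_inter_pureEdges, starEdgeSet_mixedStar_sdiff_pureEdges,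
      ← card_pos, ← card_pos, card_starEdgeSet_mixedHalf subset_union_left,
      card_starEdgeSet_mixedHalf subset_union_right, card_mixedPureLeaves, card_mixedPrimeLeaves]
    omega

variable (a c) in
theorem exists_almostStarFactor :
    ∃ (P : Finset (Fin (g a c) × Finset (Fin (g a c)))) (Pure : Finset (Sym2 (Fin (g a c)))),
      IsAlmostStarFactor (n a c) (g a c) (2 * a + 3) P ∧
      IsAdmissibleLabeling (g a c) (factorEdges (g a c) P) Pure ∧
      (∀ d, 1 ≤ d → d ≤ μ a c → ∃ e ∈ Pure, pairDiff (g a c) e = d ∧ IsForwardEdge (g a c) e) ∧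
      (∀ d, ((factorEdges (g a c) P).filter (fun e => pairDiff (g a c) e = d)).card ≤ 2) ∧
      (∃! p, p ∈ P ∧ IsMixedStar (g a c) Pure p) ∧
      (∀ p ∈ P, IsMixedStar (g a c) Pure p →
        (starEdgeSet p ∩ Pure).card = a + c + 2 ∧
        (starEdgeSet p \ Pure).card = a + c + 1 ∧
        ((starEdgeSet p \ Pure).filter (fun e => IsBackwardEdge (g a c) e)).card = a + 1 ∧
        ((starEdgeSet p \ Pure).filter (fun e => IsForwardEdge (g a c) e)).card = c) := by
  have hE := (factorEdges_factor (a := a) (c := c)).le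
  have hmixed : liftStar (g a c) (mixedStar a c) ∈ factor a c := mem_image_of_mem _ mixedStar_mem
  refine ⟨factor a c, pureEdges a c, factor_isAlmostStarFactor,
    isAdmissibleLabeling_of_injOn (factorEdges_factor ▸ subset_union_left) hE
      injOn_pairDiff_pureEdges injOn_pairDiff_primeEdges fun e he => ?_,
    fun d hd₁ hd₂ => exists_pureEdge_pairDiff_eq hd₁ hd₂,
    card_filter_pairDiff_le_two hE injOn_pairDiff_pureEdges injOn_pairDiff_primeEdges,
    ⟨_, ⟨hmixed, (isMixedStar_iff hmixed).2 rfl⟩, fun p hp => (isMixedStar_iff hp.1).1 hp.2⟩,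
    fun p hp hmix => ?_⟩
  · obtain ⟨hd₁, hd₂⟩ := mem_Icc.1 (pairDiff_mem_Icc he)
    obtain ⟨e', he', hd, -⟩ := exists_pureEdge_pairDiff_eq hd₁ hd₂
    exact ⟨e', he', hd⟩
  · have := params a c
    obtain rfl := (isMixedStar_iff hp).1 hmix
    have hprime : mixedPrimeLeaves a c ⊆ (mixedStar a c).2 := subset_union_right
    rw [starEdgeSet_mixedStar_inter_pureEdges, starEdgeSet_mixedStar_sdiff_pureEdges,
      filter_isBackwardEdge_mixedPrimeEdges, filter_isForwardEdge_mixedPrimeEdges,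
      card_starEdgeSet_mixedHalf subset_union_left, card_starEdgeSet_mixedHalf hprime,
      card_starEdgeSet_mixedHalf (subset_union_left.trans hprime),
      card_starEdgeSet_mixedHalf (subset_union_right.trans hprime), card_mixedPureLeaves,
      card_mixedPrimeLeaves, mixedBackLeaves, mixedForwardLeaves, Nat.card_Ico, Nat.card_Ico]
    omega

end SmallK

theorem almost_factor_small_k_general (n q k : ℕ) (hq : n = 2 * q + 1)
    (hk1 : 1 ≤ k) (hk2 : k ≤ q)
    (g : ℕ) (hg : g = 2 * n * k + n + 2)
    (μ : ℕ) (hμ : 2 * μ = 2 * n * k + n + 1)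
    (w : ℕ) (hw2 : w ≤ n + 1) (hw : w ≡ μ + 1 [MOD n + 1])
    (t : ℕ) (ht1 : t ≤ n) (ht2 : t ≡ g [MOD n + 1]) :
    ∃ (P : Finset (Fin g × Finset (Fin g))) (Pure : Finset (Sym2 (Fin g))),
      IsAlmostStarFactor n g t P ∧
      IsAdmissibleLabeling g (factorEdges g P) Pure ∧
      (∀ d, 1 ≤ d → d ≤ μ → ∃ e ∈ Pure, pairDiff g e = d ∧ IsForwardEdge g e) ∧
      (∀ d, 1 ≤ d → d ≤ μ →
        ((factorEdges g P).filter (fun e => pairDiff g e = d)).card ≤ 2) ∧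
      (∃! p, p ∈ P ∧ IsMixedStar g Pure p) ∧
      (∀ p ∈ P, IsMixedStar g Pure p →
        (starEdgeSet p ∩ Pure).card = q + 1 ∧
        (starEdgeSet p \ Pure).card = q ∧
        ((starEdgeSet p \ Pure).filter (fun e => IsBackwardEdge g e)).card = w - 1 ∧
        ((starEdgeSet p \ Pure).filter (fun e => IsForwardEdge g e)).card
          = q - (w - 1)) := by
  obtain ⟨c, rfl⟩ : ∃ c, k = c + 1 := ⟨k - 1, by omega⟩
  obtain ⟨a, rfl⟩ : ∃ a, q = a + c + 1 := ⟨q - c - 1, by omega⟩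
  obtain ⟨hn, hμ', -, hg'⟩ := SmallK.params a c
  obtain rfl : n = SmallK.n a c := by omega
  obtain rfl : μ = SmallK.μ a c := by linarith
  obtain rfl : g = SmallK.g a c := by linarith
  obtain rfl : t = 2 * a + 3 :=
    eq_of_modEq_add_mul (k := 2 * c + 2)
      (ht2.trans (congrArg (· % _) (by rw [hg', hμ']; ring))) (by omega) (by omega)
  have hw' : w ≡ a + 2 + (c + 1) * (SmallK.n a c + 1) [MOD SmallK.n a c + 1] :=
    hw.trans (congrArg (· % _) (by rw [hμ']; ring))
  obtain rfl : w = a + 2 := by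
    rcases hw2.lt_or_eq with hlt | rfl
    · exact eq_of_modEq_add_mul hw' hlt (by omega)
    · rw [Nat.ModEq, Nat.mod_self, Nat.add_mul_mod_self_right, Nat.mod_eq_of_lt (by omega)] at hw'
      omega
  obtain ⟨P, Pure, hP, hadm, hpure, htwo, hmixed, hcounts⟩ := SmallK.exists_almostStarFactor a c
  refine ⟨P, Pure, hP, hadm, hpure, fun d _ _ => htwo d, hmixed, fun p hp hmix => ?_⟩
  obtain ⟨h₁, h₂, h₃, h₄⟩ := hcounts p hp hmix
  exact ⟨by omega, by omega, by omega, by omega⟩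

/-- Lemma 4 (1 ≤ k ≤ q): for odd `n = 2q+1 > 1`, `g = 2nk + n + 2`, `μ = (2nk+n+1)/2`
and `w ≡ μ+1 (mod n+1)` with `1 ≤ w ≤ n+1`, there is an almost `n`-star factor on `Z_g`
with an admissible pure/prime labeling such that every difference `d ∈ {1, …, μ}` is
realized by its pure edge, which is forward, and by at most two edges overall; there is
exactly one mixed star, having `q+1` pure edges and `q` prime edges of which `w-1` are
backward and `q-(w-1)` are forward; and the little star has `t-1` leaves. -/
theorem almost_factor_small_k (n q k : ℕ) (hq : n = 2 * q + 1) (hn : 1 < n)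
    (hk1 : 1 ≤ k) (hk2 : k ≤ q)
    (g : ℕ) (hg : g = 2 * n * k + n + 2)
    (μ : ℕ) (hμ : 2 * μ = 2 * n * k + n + 1)
    (w : ℕ) (hw1 : 1 ≤ w) (hw2 : w ≤ n + 1) (hw : w ≡ μ + 1 [MOD n + 1])
    (t : ℕ) (ht1 : t ≤ n) (ht2 : t ≡ g [MOD n + 1]) :
    ∃ (P : Finset (Fin g × Finset (Fin g))) (Pure : Finset (Sym2 (Fin g))),
      IsAlmostStarFactor n g t P ∧
      IsAdmissibleLabeling g (factorEdges g P) Pure ∧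
      (∀ d, 1 ≤ d → d ≤ μ → ∃ e ∈ Pure, pairDiff g e = d ∧ IsForwardEdge g e) ∧
      (∀ d, 1 ≤ d → d ≤ μ →
        ((factorEdges g P).filter (fun e => pairDiff g e = d)).card ≤ 2) ∧
      (∃! p, p ∈ P ∧ IsMixedStar g Pure p) ∧
      (∀ p ∈ P, IsMixedStar g Pure p →
        (starEdgeSet p ∩ Pure).card = q + 1 ∧
        (starEdgeSet p \ Pure).card = q ∧
        ((starEdgeSet p \ Pure).filter (fun e => IsBackwardEdge g e)).card = w - 1 ∧
        ((starEdgeSet p \ Pure).filter (fun e => IsForwardEdge g e)).card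
          = q - (w - 1)) :=
  almost_factor_small_k_general n q k hq hk1 hk2 g hg μ hμ w hw2 hw t ht1 ht2
end

section
/- Let n > 1 be odd and let g = 2n+2. There exist two vertex-disjoint n-stars on Z_g whose vertex sets partition Z_g (an almost n-star factor with no little star, since t = 0) such that every difference d ∈ {1,…,n} is realized at least once by a forward edge of the factor and is realized by at most two edges of the factor. -/
/-! The factor consists of the stars centered at `0` and `n + 1` whose leaves are the `n` vertices
following the center. An edge from `c` to `c + i` with `2i ≤ g` is a forward edge of difference
`i`, so the first star realizes every difference forward, and each star has just one edge of each
difference. -/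

open Finset

section Differences

variable {g : ℕ} {u v : Fin g}

lemma pairSpan_mk_of_le (h : u ≤ v) : pairSpan g s(u, v) = v.val - u.val := by
  simp only [pairSpan, Sym2.lift_mk, Fin.le_def] at h ⊢
  omega

lemma pairDiff_mk_of_le (h : u ≤ v) (hg : 2 * (v.val - u.val) ≤ g) :
    pairDiff g s(u, v) = v.val - u.val := by
  rw [pairDiff, pairSpan_mk_of_le h]
  omega

lemma isForwardEdge_mk_of_le (h : u ≤ v) (hg : 2 * (v.val - u.val) ≤ g) :
    IsForwardEdge g s(u, v) := by
  rw [IsForwardEdge, pairDiff_mk_of_le h hg, pairSpan_mk_of_le h]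

end Differences

def intervalStar {g : ℕ} (a b : Fin g) : Fin g × Finset (Fin g) :=
  (a, Ioc a b)

section IntervalStar

variable {g : ℕ} (a b : Fin g)

lemma card_intervalStar_leaves : (intervalStar a b).2.card = b.val - a.val :=
  Fin.card_Ioc a b

lemma center_intervalStar_notMem_leaves : (intervalStar a b).1 ∉ (intervalStar a b).2 := by
  simp [intervalStar]

lemma mem_vertices_intervalStar_iff (hab : a ≤ b) {x : Fin g} :
    x = (intervalStar a b).1 ∨ x ∈ (intervalStar a b).2 ↔ a ≤ x ∧ x ≤ b := by
  simp only [intervalStar, mem_Ioc, Fin.le_def, Fin.lt_def, Fin.ext_iff] at hab ⊢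
  omega

variable {a b}

lemma exists_forward_edge_intervalStar (hg : 2 * (b.val - a.val) ≤ g) {d : ℕ}
    (hd₁ : 1 ≤ d) (hd₂ : d ≤ b.val - a.val) :
    ∃ e ∈ starEdgeSet (intervalStar a b), pairDiff g e = d ∧ IsForwardEdge g e := by
  let x : Fin g := ⟨a.val + d, by omega⟩
  have hax : a ≤ x := Fin.le_def.2 (Nat.le_add_right _ _)
  have hspan : x.val - a.val = d := Nat.add_sub_cancel_left _ _
  refine ⟨s(a, x), mem_image_of_mem _ ?_, ?_, isForwardEdge_mk_of_le hax (by omega)⟩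
  · simp only [intervalStar, mem_Ioc, Fin.lt_def, Fin.le_def, x]
    omega
  · rw [pairDiff_mk_of_le hax (by omega), hspan]

lemma card_filter_pairDiff_starEdgeSet_intervalStar_le_one (hg : 2 * (b.val - a.val) ≤ g)
    (d : ℕ) : ((starEdgeSet (intervalStar a b)).filter (fun e => pairDiff g e = d)).card ≤ 1 := by
  have hdiff : ∀ x ∈ Ioc a b, pairDiff g s(a, x) = x.val - a.val := fun x hx => by
    rw [mem_Ioc, Fin.lt_def, Fin.le_def] at hx
    exact pairDiff_mk_of_le (Fin.le_def.2 hx.1.le) (by omega)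
  refine card_le_one.2 ?_
  simp only [mem_filter, starEdgeSet, intervalStar, mem_image]
  rintro _ ⟨⟨x, hx, rfl⟩, rfl⟩ _ ⟨⟨y, hy, rfl⟩, hxy⟩
  rw [hdiff x hx, hdiff y hy] at hxy
  rw [mem_Ioc, Fin.lt_def] at hx hy
  rw [Fin.ext (show x.val = y.val by omega)]

end IntervalStar

lemma factorEdges_pair {g : ℕ} (p q : Fin g × Finset (Fin g)) :
    factorEdges g {p, q} = starEdgeSet p ∪ starEdgeSet q := by
  rw [factorEdges, biUnion_insert, singleton_biUnion]

section TwoIntervalStars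

variable (n : ℕ)

def lowerStar : Fin (2 * n + 2) × Finset (Fin (2 * n + 2)) :=
  intervalStar ⟨0, by omega⟩ ⟨n, by omega⟩

def upperStar : Fin (2 * n + 2) × Finset (Fin (2 * n + 2)) :=
  intervalStar ⟨n + 1, by omega⟩ ⟨2 * n + 1, by omega⟩

def twoIntervalStars : Finset (Fin (2 * n + 2) × Finset (Fin (2 * n + 2))) :=
  {lowerStar n, upperStar n}

lemma mem_twoIntervalStars {p : Fin (2 * n + 2) × Finset (Fin (2 * n + 2))} :
    p ∈ twoIntervalStars n ↔ p = lowerStar n ∨ p = upperStar n := by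
  rw [twoIntervalStars, mem_insert, mem_singleton]

lemma mem_vertices_lowerStar_iff (x : Fin (2 * n + 2)) :
    x = (lowerStar n).1 ∨ x ∈ (lowerStar n).2 ↔ x.val ≤ n := by
  rw [lowerStar, mem_vertices_intervalStar_iff _ _ (Fin.le_def.2 (Nat.zero_le n))]
  simp [Fin.le_def]

lemma mem_vertices_upperStar_iff (x : Fin (2 * n + 2)) :
    x = (upperStar n).1 ∨ x ∈ (upperStar n).2 ↔ n < x.val := by
  rw [upperStar, mem_vertices_intervalStar_iff _ _ (Fin.le_def.2 (by simp only; omega))]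
  simp only [Fin.le_def]
  omega

lemma card_twoIntervalStars : (twoIntervalStars n).card = 2 := by
  refine card_pair fun h => ?_
  simpa [lowerStar, upperStar, intervalStar] using congrArg (fun p => p.1.val) h

lemma isAlmostStarFactor_twoIntervalStars :
    IsAlmostStarFactor n (2 * n + 2) 0 (twoIntervalStars n) := by
  refine ⟨fun p hp => ?_, fun x => ?_, if_pos rfl ▸ fun p hp => ?_⟩
  · rcases (mem_twoIntervalStars n).1 hp with rfl | rfl <;>
      exact center_intervalStar_notMem_leaves _ _
  · by_cases hxn : x.val ≤ n
    · refine ⟨lowerStar n, ⟨(mem_twoIntervalStars n).2 (Or.inl rfl),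
        (mem_vertices_lowerStar_iff n x).2 hxn⟩, ?_⟩
      rintro p ⟨hp, hxp⟩
      rcases (mem_twoIntervalStars n).1 hp with rfl | rfl
      · rfl
      · exact absurd ((mem_vertices_upperStar_iff n x).1 hxp) (not_lt.2 hxn)
    · refine ⟨upperStar n, ⟨(mem_twoIntervalStars n).2 (Or.inr rfl),
        (mem_vertices_upperStar_iff n x).2 (not_le.1 hxn)⟩, ?_⟩
      rintro p ⟨hp, hxp⟩
      rcases (mem_twoIntervalStars n).1 hp with rfl | rfl
      · exact absurd ((mem_vertices_lowerStar_iff n x).1 hxp) hxn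
      · rfl
  · rcases (mem_twoIntervalStars n).1 hp with rfl | rfl <;>
      simp only [lowerStar, upperStar, card_intervalStar_leaves] <;> omega

lemma exists_forward_edge_twoIntervalStars {d : ℕ} (hd₁ : 1 ≤ d) (hd₂ : d ≤ n) :
    ∃ e ∈ factorEdges (2 * n + 2) (twoIntervalStars n),
      pairDiff (2 * n + 2) e = d ∧ IsForwardEdge (2 * n + 2) e := by
  obtain ⟨e, he, hed⟩ := exists_forward_edge_intervalStar (g := 2 * n + 2)
    (a := ⟨0, by omega⟩) (b := ⟨n, by omega⟩) (by simp only [Nat.sub_zero]; omega) hd₁ hd₂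
  rw [twoIntervalStars, factorEdges_pair]
  exact ⟨e, mem_union_left _ he, hed⟩

lemma card_filter_pairDiff_factorEdges_twoIntervalStars_le_two (d : ℕ) :
    ((factorEdges (2 * n + 2) (twoIntervalStars n)).filter
      (fun e => pairDiff (2 * n + 2) e = d)).card ≤ 2 := by
  rw [twoIntervalStars, factorEdges_pair, filter_union]
  refine (card_union_le _ _).trans (Nat.add_le_add (b := 1) (d := 1) ?_ ?_) <;>
    exact card_filter_pairDiff_starEdgeSet_intervalStar_le_one (by simp only; omega) d

end TwoIntervalStars

theorem almost_factor_even_k_one_general (n : ℕ)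
    (g : ℕ) (hg : g = 2 * n + 2) :
    ∃ P : Finset (Fin g × Finset (Fin g)),
      IsAlmostStarFactor n g 0 P ∧ P.card = 2 ∧
      (∀ d, 1 ≤ d → d ≤ n →
        ∃ e ∈ factorEdges g P, pairDiff g e = d ∧ IsForwardEdge g e) ∧
      (∀ d, 1 ≤ d → d ≤ n →
        ((factorEdges g P).filter (fun e => pairDiff g e = d)).card ≤ 2) := by
  subst hg
  exact ⟨twoIntervalStars n, isAlmostStarFactor_twoIntervalStars n, card_twoIntervalStars n,
    fun _ hd₁ hd₂ => exists_forward_edge_twoIntervalStars n hd₁ hd₂,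
    fun d _ _ => card_filter_pairDiff_factorEdges_twoIntervalStars_le_two n d⟩

/-- Lemma 6 (k = 1, even case): for odd `n > 1` and `g = 2n + 2`, there are two
vertex-disjoint `n`-stars partitioning `Z_g` (an almost `n`-star factor with no little
star, since `t = 0`) such that every difference `d ∈ {1, …, n}` is realized at least
once by a forward edge and at most twice overall. -/
theorem almost_factor_even_k_one (n : ℕ) (hn : 1 < n) (hodd : Odd n)
    (g : ℕ) (hg : g = 2 * n + 2) :
    ∃ P : Finset (Fin g × Finset (Fin g)),
      IsAlmostStarFactor n g 0 P ∧ P.card = 2 ∧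
      (∀ d, 1 ≤ d → d ≤ n →
        ∃ e ∈ factorEdges g P, pairDiff g e = d ∧ IsForwardEdge g e) ∧
      (∀ d, 1 ≤ d → d ≤ n →
        ((factorEdges g P).filter (fun e => pairDiff g e = d)).card ≤ 2) :=
  almost_factor_even_k_one_general n g hg
end

section
/- Let n > 1 be odd, let k' ≥ 1 be an integer, and let v = n(n+1)k' + 2(n+1). Then the complete graph K_v contains v/(n+1) pairwise edge-disjoint K_{1,n}-factors. -/
/-!
Split the `v = (n + 1) m` vertices into `m` blocks of `n + 1`, indexed by a group `G` of order
`m`, each with one distinguished vertex at level `0`. For a shift `s ∈ G`, the stars centred at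
the level-`0` vertex of block `j` with leaves the other `n` vertices of block `j + s` form a
`K_{1,n}`-factor. Every edge of that factor joins a level-`0` vertex of some block `j` to a
vertex of nonzero level in block `j + s`, so it determines `s`: distinct shifts give
edge-disjoint factors, and there are `m = v / (n + 1)` of them.
-/

open Finset

section ShiftedStars

variable {V G : Type*} [DecidableEq V] [AddGroup G] {n : ℕ} (e : V ≃ Fin (n + 1) × G)

def shiftedStar (s j : G) : V × Finset V :=
  (e.symm (0, j), (univ.erase 0).image fun a => e.symm (a, j + s))

lemma mem_shiftedStar_iff {s j : G} {x : V} :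
    (x = (shiftedStar e s j).1 ∨ x ∈ (shiftedStar e s j).2) ↔
      j = (e x).2 - if (e x).1 = 0 then 0 else s := by
  obtain ⟨⟨a, g⟩, rfl⟩ := e.symm.surjective x
  by_cases ha : a = 0
  · subst ha
    simp [shiftedStar, eq_comm]
  · simp [shiftedStar, ha, eq_sub_iff_add_eq, eq_comm]

variable [Fintype G]

def shiftedStarFamily (s : G) : Finset (V × Finset V) :=
  univ.image (shiftedStar e s)

lemma mem_shiftedStarFamily_edges_iff {s : G} {z : Sym2 V} :
    z ∈ (shiftedStarFamily e s).biUnion starEdgeSet ↔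
      ∃ j, ∃ a ≠ 0, s(e.symm (0, j), e.symm (a, j + s)) = z := by
  simp [shiftedStarFamily, starEdgeSet, shiftedStar]

lemma disjoint_shiftedStarFamily_edges {s t : G} (hst : s ≠ t) :
    Disjoint ((shiftedStarFamily e s).biUnion starEdgeSet)
      ((shiftedStarFamily e t).biUnion starEdgeSet) := by
  simp only [disjoint_left, mem_shiftedStarFamily_edges_iff]
  rintro _ ⟨j, a, -, rfl⟩ ⟨j', b, hb, h⟩
  rcases Sym2.eq_iff.1 h with ⟨hc, hl⟩ | ⟨-, hl⟩
  · obtain rfl : j' = j := congrArg Prod.snd (e.symm.injective hc)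
    exact hst (add_left_cancel (congrArg Prod.snd (e.symm.injective hl))).symm
  · exact hb (congrArg Prod.fst (e.symm.injective hl))

variable [Fintype V]

lemma shiftedStarFamily_isStarFactorFamily (s : G) :
    IsStarFactorFamily n (shiftedStarFamily e s) := by
  refine ⟨?_, fun x => ?_⟩
  · simp only [shiftedStarFamily, mem_image, mem_univ, true_and, forall_exists_index,
      forall_apply_eq_imp_iff]
    intro j
    refine ⟨?_, ?_⟩
    · rw [shiftedStar, card_image_of_injective _ fun a b h => by simpa using e.symm.injective h]
      simp
    · simp [shiftedStar]
  · refine ⟨shiftedStar e s ((e x).2 - if (e x).1 = 0 then 0 else s),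
      ⟨mem_image_of_mem _ (mem_univ _), (mem_shiftedStar_iff e).2 rfl⟩, ?_⟩
    rintro _ ⟨hp, hx⟩
    obtain ⟨j, -, rfl⟩ := mem_image.1 hp
    rw [← (mem_shiftedStar_iff e).1 hx]

end ShiftedStars

theorem exists_pairwise_disjoint_starFactors {V G : Type*} [Fintype V] [DecidableEq V]
    [AddGroup G] [Fintype G] {n : ℕ} (e : V ≃ Fin (n + 1) × G) :
    ∃ F : G → Finset (Sym2 V),
      (∀ s, IsStarFactor n (F s)) ∧ Pairwise fun s t => Disjoint (F s) (F t) :=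
  ⟨fun s => (shiftedStarFamily e s).biUnion starEdgeSet,
    fun s => ⟨_, shiftedStarFamily_isStarFactorFamily e s, rfl⟩,
    fun _ _ => disjoint_shiftedStarFamily_edges e⟩

theorem part_one_factors_general (n : ℕ) (k' : ℕ)
    (v : ℕ) (hv : v = n * (n + 1) * k' + 2 * (n + 1)) :
    ∃ F : Fin (v / (n + 1)) → Finset (Sym2 (Fin v)),
      (∀ i, IsStarFactor n (F i)) ∧
      ∀ i j, i ≠ j → Disjoint (F i) (F j) := by
  have hv' : v = (n + 1) * (n * k' + 2) := by rw [hv]; ring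
  rw [hv', Nat.mul_div_cancel_left _ n.succ_pos, ← hv']
  have : NeZero (n * k' + 2) := ⟨by omega⟩
  obtain ⟨F, hF, hdisj⟩ :=
    exists_pairwise_disjoint_starFactors ((finCongr hv').trans finProdFinEquiv.symm)
  exact ⟨F, hF, fun _ _ => @hdisj _ _⟩

/-- Part I factors: for odd `n > 1` and `v = n(n+1)k' + 2(n+1)` with `k' ≥ 1`, the
complete graph `K_v` contains `v/(n+1)` pairwise edge-disjoint `K_{1,n}`-factors. -/
theorem part_one_factors (n : ℕ) (hn : 1 < n) (hodd : Odd n) (k' : ℕ) (hk : 1 ≤ k')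
    (v : ℕ) (hv : v = n * (n + 1) * k' + 2 * (n + 1)) :
    ∃ F : Fin (v / (n + 1)) → Finset (Sym2 (Fin v)),
      (∀ i, IsStarFactor n (F i)) ∧
      ∀ i j, i ≠ j → Disjoint (F i) (F j) :=
  part_one_factors_general n k' v hv
end

section
/- For every odd integer n ≥ 3, a (K_2,K_{1,n})-URD(2(n+1); 1, n+1) exists; that is, the edge set of the complete graph K_{2(n+1)} can be partitioned into one perfect matching and n+1 K_{1,n}-factors. -/
/-!
Write the `2(n+1)` vertices as pairs `(s, c)` of a side `s : Bool` and a class `c` among `n+1`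
linearly ordered classes. The edges `{(false, c), (true, c)}` form the 1-factor. Every other edge
is oriented by letting `(s, c)` own `(t, d)` when `c ≠ d` and `s = t ↔ c < d`: exactly one endpoint
of such an edge owns it, each vertex owns exactly one vertex of every other class, and each vertex
outside class `c` is owned by exactly one of the two vertices of class `c`. So the two stars formed
by the vertices of class `c` and the vertices they own make up an `n`-star factor, and the `n+1`
factors obtained this way partition the edges between different classes.
-/

open Finset

lemma Finset.existsUnique_mem_univ_image {α β : Type*} [Fintype α] [DecidableEq β]
    {f : α → β} {P : β → Prop} (h : ∃! a, P (f a)) : ∃! b, b ∈ univ.image f ∧ P b := by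
  obtain ⟨a, ha, huniq⟩ := h
  refine ⟨f a, ⟨mem_image_of_mem f (mem_univ a), ha⟩, ?_⟩
  rintro b ⟨hb, hPb⟩
  obtain ⟨a', -, rfl⟩ := mem_image.1 hb
  rw [huniq a' hPb]

namespace StarURD

variable {V C : Type*} (φ : V ≃ Bool × C)

section Matching

variable [Fintype V] [DecidableEq V] [Fintype C]

def matching : Finset (Sym2 V) :=
  univ.image fun c => s(φ.symm (false, c), φ.symm (true, c))

lemma isOneFactor_matching : IsOneFactor (matching φ) := by
  refine ⟨?_, fun x => existsUnique_mem_univ_image ?_⟩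
  · simp [matching]
  · obtain ⟨⟨t, d⟩, rfl⟩ := φ.symm.surjective x
    cases t <;> simp [eq_comm]

end Matching

variable [LinearOrder C]

def Owns (x y : V) : Prop :=
  (φ x).2 ≠ (φ y).2 ∧ ((φ x).1 = (φ y).1 ↔ (φ x).2 < (φ y).2)

instance : DecidableRel (Owns φ) := fun x y => by unfold Owns; infer_instance

variable {φ}

lemma owns_symm_symm {s t : Bool} {c d : C} :
    Owns φ (φ.symm (s, c)) (φ.symm (t, d)) ↔ c ≠ d ∧ (s = t ↔ c < d) := by
  simp [Owns]

lemma not_owns_self (x : V) : ¬ Owns φ x x := fun h => h.1 rfl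

lemma Owns.not_owns {x y : V} (h : Owns φ x y) : ¬ Owns φ y x := by
  obtain ⟨⟨s, c⟩, rfl⟩ := φ.symm.surjective x
  obtain ⟨⟨t, d⟩, rfl⟩ := φ.symm.surjective y
  rw [owns_symm_symm] at h ⊢
  grind

lemma owns_or_owns {x y : V} (h : (φ x).2 ≠ (φ y).2) : Owns φ x y ∨ Owns φ y x := by
  obtain ⟨⟨s, c⟩, rfl⟩ := φ.symm.surjective x
  obtain ⟨⟨t, d⟩, rfl⟩ := φ.symm.surjective y
  simp only [owns_symm_symm, Equiv.apply_symm_apply] at h ⊢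
  grind

lemma Owns.eq_of_mk_eq {x y x' y' : V} (h : Owns φ x y) (h' : Owns φ x' y')
    (he : s(x, y) = s(x', y')) : x = x' := by
  rcases Sym2.eq_iff.1 he with ⟨rfl, -⟩ | ⟨rfl, rfl⟩
  · rfl
  · exact absurd h' h.not_owns

lemma existsUnique_eq_or_owns (c : C) (x : V) :
    ∃! s, x = φ.symm (s, c) ∨ Owns φ (φ.symm (s, c)) x := by
  obtain ⟨⟨t, d⟩, rfl⟩ := φ.symm.surjective x
  simp only [owns_symm_symm, φ.symm.injective.eq_iff, Prod.mk.injEq]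
  by_cases hdc : d = c
  · subst hdc
    simp
  · by_cases hcd : c < d <;> cases t <;> simp [hdc, Ne.symm hdc, hcd]

variable [Fintype V]

variable (φ) in
def ownedBy (x : V) : Finset V := univ.filter (Owns φ x)

@[simp]
lemma mem_ownedBy {x y : V} : y ∈ ownedBy φ x ↔ Owns φ x y := by simp [ownedBy]

lemma card_ownedBy [Fintype C] (x : V) : #(ownedBy φ x) = Fintype.card C - 1 := by
  obtain ⟨⟨s, c⟩, rfl⟩ := φ.symm.surjective x
  rw [← card_univ, ← card_erase_of_mem (mem_univ c)]
  refine card_nbij' (fun y => (φ y).2) (fun d => φ.symm (if c < d then s else !s, d))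
    ?_ ?_ ?_ ?_
  · intro y hy
    obtain ⟨⟨t, d⟩, rfl⟩ := φ.symm.surjective y
    simp_all [owns_symm_symm, Ne.symm]
  · intro d hd
    simp_all [owns_symm_symm, Ne.symm]
  · intro y hy
    obtain ⟨⟨t, d⟩, rfl⟩ := φ.symm.surjective y
    rw [mem_coe, mem_ownedBy, owns_symm_symm] at hy
    simp only [Equiv.apply_symm_apply, EmbeddingLike.apply_eq_iff_eq, Prod.mk.injEq, and_true]
    cases s <;> cases t <;> grind
  · intro d hd
    simp

variable [DecidableEq V]

variable (φ) in
def starFamily (c : C) : Finset (V × Finset V) :=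
  univ.image fun s => (φ.symm (s, c), ownedBy φ (φ.symm (s, c)))

variable (φ) in
def starFactorEdges (c : C) : Finset (Sym2 V) := (starFamily φ c).biUnion starEdgeSet

lemma mem_starFactorEdges {c : C} {e : Sym2 V} :
    e ∈ starFactorEdges φ c ↔ ∃ x y, (φ x).2 = c ∧ Owns φ x y ∧ s(x, y) = e := by
  simp only [starFactorEdges, starFamily, starEdgeSet, mem_biUnion, mem_image, mem_univ,
    true_and, exists_exists_eq_and, mem_ownedBy]
  constructor
  · rintro ⟨s, y, hy, rfl⟩
    exact ⟨_, y, by simp, hy, rfl⟩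
  · rintro ⟨x, y, rfl, hxy, rfl⟩
    exact ⟨(φ x).1, y, by simpa using hxy, by simp⟩

lemma disjoint_starFactorEdges {c d : C} (h : c ≠ d) :
    Disjoint (starFactorEdges φ c) (starFactorEdges φ d) := by
  refine disjoint_left.2 fun e he he' => h ?_
  obtain ⟨x, y, rfl, hxy, rfl⟩ := mem_starFactorEdges.1 he
  obtain ⟨x', y', rfl, hxy', he⟩ := mem_starFactorEdges.1 he'
  rw [hxy.eq_of_mk_eq hxy' he.symm]

variable [Fintype C]

lemma isStarFactorFamily_starFamily (c : C) :
    IsStarFactorFamily (Fintype.card C - 1) (starFamily φ c) := by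
  refine ⟨?_, fun x => existsUnique_mem_univ_image ?_⟩
  · simp only [starFamily, forall_mem_image, mem_univ, forall_const]
    exact fun s => ⟨card_ownedBy _, fun h => not_owns_self _ (mem_ownedBy.1 h)⟩
  · simpa only [mem_ownedBy] using existsUnique_eq_or_owns c x

lemma isStarFactor_starFactorEdges (c : C) :
    IsStarFactor (Fintype.card C - 1) (starFactorEdges φ c) :=
  ⟨_, isStarFactorFamily_starFamily c, rfl⟩

lemma disjoint_matching_starFactorEdges (c : C) :
    Disjoint (matching φ) (starFactorEdges φ c) := by
  refine disjoint_left.2 fun e he he' => ?_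
  obtain ⟨x, y, -, hxy, rfl⟩ := mem_starFactorEdges.1 he'
  obtain ⟨d, -, hd⟩ := mem_image.1 he
  rcases Sym2.eq_iff.1 hd with ⟨rfl, rfl⟩ | ⟨rfl, rfl⟩ <;> simp [Owns] at hxy

lemma not_isDiag_iff {e : Sym2 V} :
    ¬ e.IsDiag ↔ e ∈ matching φ ∨ ∃ c, e ∈ starFactorEdges φ c := by
  refine ⟨fun he => ?_, ?_⟩
  · induction e using Sym2.ind with | _ x y => ?_
    rw [Sym2.mk_isDiag_iff] at he
    by_cases hxy : (φ x).2 = (φ y).2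
    · left
      obtain ⟨⟨s, c⟩, rfl⟩ := φ.symm.surjective x
      obtain ⟨⟨t, d⟩, rfl⟩ := φ.symm.surjective y
      simp only [Equiv.apply_symm_apply] at hxy
      subst hxy
      refine mem_image.2 ⟨c, mem_univ c, ?_⟩
      cases s <;> cases t <;> simp_all [Sym2.eq_swap]
    · right
      rcases owns_or_owns hxy with h | h
      · exact ⟨_, mem_starFactorEdges.2 ⟨x, y, rfl, h, rfl⟩⟩
      · exact ⟨_, mem_starFactorEdges.2 ⟨y, x, rfl, h, Sym2.eq_swap⟩⟩
  · rintro (he | ⟨c, he⟩)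
    · exact (isOneFactor_matching φ).1 e he
    · obtain ⟨x, y, -, hxy, rfl⟩ := mem_starFactorEdges.1 he
      exact Sym2.mk_isDiag_iff.not.2 fun h => not_owns_self y (h ▸ hxy)

end StarURD

theorem StarURD.isURD_of_equiv {n v : ℕ} (φ : Fin v ≃ Bool × Fin (n + 1)) :
    IsURD n v 1 (n + 1) := by
  refine ⟨fun _ => matching φ, starFactorEdges φ, fun _ => isOneFactor_matching φ,
    fun c => by simpa using isStarFactor_starFactorEdges (φ := φ) c,
    fun i j h => (h (Subsingleton.elim i j)).elim, fun _ _ => disjoint_starFactorEdges,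
    fun _ => disjoint_matching_starFactorEdges, fun e => ?_⟩
  simpa using not_isDiag_iff.symm

theorem urd_smallest_case_general (n : ℕ) : IsURD n (2 * (n + 1)) 1 (n + 1) :=
  StarURD.isURD_of_equiv (finProdFinEquiv.symm.trans (finTwoEquiv.prodCongr (Equiv.refl _)))

/-- For every odd `n ≥ 3`, a `(K_2, K_{1,n})`-URD`(2(n+1); 1, n+1)` exists. -/
theorem urd_smallest_case (n : ℕ) (hn : 3 ≤ n) (hodd : Odd n) :
    IsURD n (2 * (n + 1)) 1 (n + 1) :=
  urd_smallest_case_general n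
end
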